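/- arXiv:2509.06808 — 3 statements merged into one kernel-verified Lean document; each statement's English description precedes it below -/
import Mathlib

section
/- Let G be a finite simple graph with Ore-degree θ(G) ≤ 7 such that G admits no strong edge-coloring with 13 colors but every proper subgraph of G admits a strong edge-coloring with 13 colors. Then every vertex v of G satisfies 2 ≤ deg(v) ≤ 4. -/
/-- Two edges `e` and `f` of a graph `G` *see* each other if they are contained in a
common path or cycle of length at most three, i.e. they share an endpoint or some
endpoint of `e` is adjacent to some endpoint of `f`. -/
def SimpleGraph.Sees {V : Type*} (G : SimpleGraph V) (e f : Sym2 V) : Prop :=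
  ∃ u ∈ e, ∃ v ∈ f, u = v ∨ G.Adj u v

/-- `c` is a strong edge-coloring of `G`: edges that see each other get distinct colors. -/
def SimpleGraph.IsStrongEdgeColoring {V α : Type*} (G : SimpleGraph V) (c : Sym2 V → α) : Prop :=
  ∀ e ∈ G.edgeSet, ∀ f ∈ G.edgeSet, e ≠ f → G.Sees e f → c e ≠ c f

/-- `G` admits a strong edge-coloring with `n` colors. -/
def SimpleGraph.HasStrongColoring {V : Type*} (G : SimpleGraph V) (n : ℕ) : Prop :=
  ∃ c : Sym2 V → Fin n, G.IsStrongEdgeColoring c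

open Finset

namespace StrongProofAux

open SimpleGraph

variable {V : Type*} [Fintype V] [DecidableEq V] (G : SimpleGraph V) [DecidableRel G.Adj]

lemma sees_symm {e f : Sym2 V} (h : G.Sees e f) : G.Sees f e := by
  obtain ⟨u, hu, w, hw, h⟩ := h
  exact ⟨w, hw, u, hu, h.imp Eq.symm SimpleGraph.Adj.symm⟩

/-- `c` is a strong coloring of the part of `G` away from `v`. -/
def StrongOff (c : Sym2 V → Fin 13) (v : V) : Prop :=
  ∀ e ∈ G.edgeSet, ∀ f ∈ G.edgeSet, v ∉ e → v ∉ f → e ≠ f → G.Sees e f → c e ≠ c f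

open scoped Classical in
/-- colored edges (edges avoiding `v`) seen by the pending edge `s(v,u)`. -/
noncomputable def Fset (v u : V) : Finset (Sym2 V) :=
  G.edgeFinset.filter (fun f => v ∉ f ∧ G.Sees s(v,u) f)

lemma mem_Fset {v u : V} {f : Sym2 V} :
    f ∈ Fset G v u ↔ f ∈ G.edgeSet ∧ v ∉ f ∧ G.Sees s(v,u) f := by
  classical
  simp [Fset, mem_filter, mem_edgeFinset]

/-- available colors for the pending edge `s(v,u)`. -/
noncomputable def Aset (c : Sym2 V → Fin 13) (v u : V) : Finset (Fin 13) :=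
  Finset.univ \ (Fset G v u).image c

lemma card_Aset (c : Sym2 V → Fin 13) (v u : V) :
    (Aset G c v u).card = 13 - ((Fset G v u).image c).card := by
  rw [Aset, card_sdiff_of_subset (subset_univ _)]
  simp

noncomputable def Uset (v : V) : Finset (Sym2 V) :=
  (G.neighborFinset v).biUnion (fun w => G.incidenceFinset w \ {s(v,w)})

noncomputable def Xset (v u : V) : Finset (Sym2 V) :=
  ((G.neighborFinset u).erase v).biUnion (fun x => G.incidenceFinset x \ {s(u,x)})

lemma mem_incidenceFinset' {w : V} {e : Sym2 V} :
    e ∈ G.incidenceFinset w ↔ e ∈ G.edgeSet ∧ w ∈ e := by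
  rw [SimpleGraph.mem_incidenceFinset]
  exact Iff.rfl

lemma Fset_subset (v u : V) (hu : G.Adj v u) :
    Fset G v u ⊆ Uset G v ∪ Xset G v u := by
  intro f hf
  rw [mem_Fset] at hf
  obtain ⟨a, ha, b, hb, hab⟩ := hf.2.2
  have hvnotf := hf.2.1
  rw [Sym2.mem_iff] at ha
  have hmemU : ∀ w : V, G.Adj v w → w ∈ f → f ∈ Uset G v := by
    intro w hw hwf
    rw [Uset, mem_biUnion]
    refine ⟨w, by rwa [mem_neighborFinset], ?_⟩
    rw [mem_sdiff, mem_incidenceFinset']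
    refine ⟨⟨hf.1, hwf⟩, ?_⟩
    simp only [mem_singleton]
    intro h
    exact hvnotf (h ▸ Sym2.mem_mk_left v w)
  rcases ha with rfl | ha
  · -- witness is v
    rcases hab with rfl | hvb
    · exact absurd hb hvnotf
    · exact mem_union_left _ (hmemU b hvb hb)
  · -- witness is u
    rw [ha] at hab
    rcases hab with rfl | hub
    · exact mem_union_left _ (hmemU u hu hb)
    · by_cases huf : u ∈ f
      · exact mem_union_left _ (hmemU u hu huf)
      · have hbv : b ≠ v := fun h => hvnotf (h ▸ hb)
        refine mem_union_right _ ?_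
        rw [Xset, mem_biUnion]
        refine ⟨b, ?_, ?_⟩
        · rw [mem_erase, mem_neighborFinset]; exact ⟨hbv, hub⟩
        · rw [mem_sdiff, mem_incidenceFinset']
          refine ⟨⟨hf.1, hb⟩, ?_⟩
          simp only [mem_singleton]
          intro h
          exact huf (h ▸ Sym2.mem_mk_left u b)

lemma card_incidence_sdiff {w z : V} (h : G.Adj w z) :
    (G.incidenceFinset z \ {s(w,z)}).card = G.degree z - 1 := by
  rw [card_sdiff_of_subset, card_incidenceFinset_eq_degree, card_singleton]
  intro e he
  rw [mem_singleton] at he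
  subst he
  rw [mem_incidenceFinset']
  exact ⟨h, Sym2.mem_mk_right w z⟩

lemma card_Uset_le (v : V) :
    (Uset G v).card ≤ ∑ w ∈ G.neighborFinset v, (G.degree w - 1) := by
  refine card_biUnion_le.trans (Finset.sum_le_sum ?_)
  intro w hw
  rw [mem_neighborFinset] at hw
  exact le_of_eq (card_incidence_sdiff G hw)

lemma card_Xset_le (v u : V) :
    (Xset G v u).card ≤ ∑ x ∈ (G.neighborFinset u).erase v, (G.degree x - 1) := by
  refine card_biUnion_le.trans (Finset.sum_le_sum ?_)
  intro x hx
  rw [mem_erase, mem_neighborFinset] at hx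
  exact le_of_eq (card_incidence_sdiff G hx.2)

/-- The key extension lemma: a strong coloring away from `v` together with a Hall system
for the pending edges at `v` gives a strong coloring of all of `G`. -/
lemma extend (v : V) (c : Sym2 V → Fin 13) (hc : StrongOff G c v)
    (hall : ∀ s : Finset V, s ⊆ G.neighborFinset v →
      s.card ≤ (s.biUnion (fun u => Aset G c v u)).card) :
    G.HasStrongColoring 13 := by
  classical
  -- Hall's theorem on the subtype of neighbors
  have hall' : ∀ s : Finset {u // u ∈ G.neighborFinset v},
      s.card ≤ (s.biUnion (fun u => Aset G c v u.1)).card := by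
    intro s
    have hsub : s.image Subtype.val ⊆ G.neighborFinset v := by
      intro w hw
      simp only [mem_image] at hw
      obtain ⟨⟨w', hw'⟩, _, rfl⟩ := hw
      exact hw'
    have hcard : (s.image Subtype.val).card = s.card :=
      card_image_of_injective _ Subtype.val_injective
    have := hall _ hsub
    rw [hcard] at this
    refine this.trans (le_of_eq (congrArg card ?_))
    rw [image_biUnion]
  obtain ⟨pick₀, hpinj, hpmem⟩ :=
    (Finset.all_card_le_biUnion_card_iff_exists_injective
      (fun u : {u // u ∈ G.neighborFinset v} => Aset G c v u.1)).mp hall'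
  refine ⟨fun f => if h : v ∈ f then
      (if h2 : (Sym2.Mem.other h) ∈ G.neighborFinset v then pick₀ ⟨_, h2⟩ else 0)
    else c f, ?_⟩
  have hother : ∀ (e : Sym2 V), e ∈ G.edgeSet → (h : v ∈ e) →
      (Sym2.Mem.other h) ∈ G.neighborFinset v := by
    intro e he h
    have := Sym2.other_spec h
    rw [← this] at he
    rw [mem_neighborFinset]
    exact he
  intro e he f hf hne hsee
  by_cases hve : v ∈ e <;> by_cases hvf : v ∈ f
  · -- both pending
    have hae := hother e he hve
    have haf := hother f hf hvf
    simp only [dif_pos hve, dif_pos hvf, dif_pos hae, dif_pos haf]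
    have hne' : Sym2.Mem.other hve ≠ Sym2.Mem.other hvf := by
      intro h
      apply hne
      rw [← Sym2.other_spec hve, ← Sym2.other_spec hvf, h]
    intro h
    exact hne' (congrArg Subtype.val (hpinj h))
  · -- e pending, f colored
    have hae := hother e he hve
    simp only [dif_pos hve, dif_neg hvf, dif_pos hae]
    have hfF : f ∈ Fset G v (Sym2.Mem.other hve) := by
      rw [mem_Fset]
      refine ⟨hf, hvf, ?_⟩
      rw [Sym2.other_spec hve]
      exact hsee
    have hm := hpmem ⟨Sym2.Mem.other hve, hae⟩
    rw [Aset, mem_sdiff] at hm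
    intro h
    exact hm.2 (h ▸ mem_image_of_mem c hfF)
  · -- f pending, e colored
    have haf := hother f hf hvf
    simp only [dif_pos hvf, dif_neg hve, dif_pos haf]
    have heF : e ∈ Fset G v (Sym2.Mem.other hvf) := by
      rw [mem_Fset]
      refine ⟨he, hve, ?_⟩
      rw [Sym2.other_spec hvf]
      exact sees_symm G hsee
    have hm := hpmem ⟨Sym2.Mem.other hvf, haf⟩
    rw [Aset, mem_sdiff] at hm
    intro h
    exact hm.2 (h ▸ mem_image_of_mem c heF)
  · -- both colored
    simp only [dif_neg hve, dif_neg hvf]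
    exact hc e he f hf hve hvf hne hsee

lemma strongOff_of_subgraph (v : V) (H : G.Subgraph)
    (hadj : ∀ a b : V, a ≠ v → b ≠ v → G.Adj a b → H.Adj a b)
    (hvv : ∀ x : H.verts, (x : V) ≠ v)
    (hc : H.coe.HasStrongColoring 13) :
    ∃ c : Sym2 V → Fin 13, StrongOff G c v := by
  classical
  obtain ⟨c₀, hc₀⟩ := hc
  refine ⟨fun e => if h : ∃ e' : Sym2 H.verts, e'.map Subtype.val = e then c₀ h.choose else 0, ?_⟩
  intro e he f hf hve hvf hne hsee
  have hlift : ∀ (z : Sym2 V), z ∈ G.edgeSet → v ∉ z →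
      ∃ z' : Sym2 H.verts, z'.map Subtype.val = z ∧ z' ∈ H.coe.edgeSet := by
    intro z hz hvz
    induction z with
    | _ a b =>
      have hav : a ≠ v := fun h => hvz (h ▸ Sym2.mem_mk_left a b)
      have hbv : b ≠ v := fun h => hvz (h ▸ Sym2.mem_mk_right a b)
      have hab : H.Adj a b := hadj a b hav hbv hz
      exact ⟨s(⟨a, H.edge_vert hab⟩, ⟨b, H.edge_vert hab.symm⟩), by simp, hab⟩
  obtain ⟨e', he'map, he'edge⟩ := hlift e he hve
  obtain ⟨f', hf'map, hf'edge⟩ := hlift f hf hvf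
  have hex_e : ∃ z' : Sym2 H.verts, z'.map Subtype.val = e := ⟨e', he'map⟩
  have hex_f : ∃ z' : Sym2 H.verts, z'.map Subtype.val = f := ⟨f', hf'map⟩
  have hinj := Sym2.map.injective (Subtype.val_injective (p := fun x => x ∈ H.verts))
  have hce : hex_e.choose = e' := hinj (hex_e.choose_spec.trans he'map.symm)
  have hcf : hex_f.choose = f' := hinj (hex_f.choose_spec.trans hf'map.symm)
  simp only [dif_pos hex_e, dif_pos hex_f, hce, hcf]
  apply hc₀ e' he'edge f' hf'edge
  · intro h; exact hne (by rw [← he'map, ← hf'map, h])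
  · obtain ⟨a, ha, b, hb, hab⟩ := hsee
    rw [← he'map] at ha
    rw [← hf'map] at hb
    rw [Sym2.mem_map] at ha hb
    obtain ⟨a', ha', rfl⟩ := ha
    obtain ⟨b', hb', rfl⟩ := hb
    refine ⟨a', ha', b', hb', ?_⟩
    rcases hab with h | h
    · exact Or.inl (Subtype.val_injective h)
    · exact Or.inr (hadj _ _ (hvv a') (hvv b') h)

/-- From minimality: for each vertex `v` there is a coloring strong away from `v`. -/
lemma exists_strongOff
    (hmin : ∀ H : G.Subgraph, H ≠ ⊤ → H.coe.HasStrongColoring 13) (v : V) :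
    ∃ c : Sym2 V → Fin 13, StrongOff G c v := by
  classical
  refine strongOff_of_subgraph G v ((⊤ : G.Subgraph).deleteVerts {v}) ?_ ?_ ?_
  · intro a b hav hbv hab
    rw [SimpleGraph.Subgraph.deleteVerts_adj]
    simp [hav, hbv, hab]
  · intro x
    have hx2 : (x : V) ∈ (Set.univ : Set V) \ {v} := by
      have hm := x.2
      simpa [SimpleGraph.Subgraph.deleteVerts_verts] using hm
    intro h
    exact hx2.2 (by simp [h])
  · apply hmin
    intro h
    have : v ∈ ((⊤ : G.Subgraph).deleteVerts {v}).verts := by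
      rw [h, SimpleGraph.Subgraph.verts_top]; trivial
    rw [SimpleGraph.Subgraph.deleteVerts_verts] at this
    simp at this


lemma edge_repr {f : Sym2 V} (hf : f ∈ G.edgeSet) {u : V} (hu : u ∈ f) :
    ∃ w, G.Adj u w ∧ f = s(u,w) := by
  refine ⟨Sym2.Mem.other hu, ?_, (Sym2.other_spec hu).symm⟩
  have h := Sym2.other_spec hu
  rw [← h] at hf
  exact hf

lemma hall_of_size (v : V) (c : Sym2 V → Fin 13)
    (h : ∀ u ∈ G.neighborFinset v, (G.neighborFinset v).card ≤ (Aset G c v u).card) :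
    ∀ s : Finset V, s ⊆ G.neighborFinset v →
      s.card ≤ (s.biUnion (fun u => Aset G c v u)).card := by
  intro s hs
  rcases s.eq_empty_or_nonempty with rfl | ⟨u, hu⟩
  · simp
  · calc s.card ≤ (G.neighborFinset v).card := card_le_card hs
      _ ≤ (Aset G c v u).card := h u (hs hu)
      _ ≤ _ := card_le_card (subset_biUnion_of_mem _ hu)

lemma degree_ge_two
    (hore : ∀ u v : V, G.Adj u v → G.degree u + G.degree v ≤ 7)
    (hG : ¬ G.HasStrongColoring 13)
    (hmin : ∀ H : G.Subgraph, H ≠ ⊤ → H.coe.HasStrongColoring 13) (v : V) :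
    2 ≤ G.degree v := by
  by_contra hlt
  push_neg at hlt
  obtain ⟨c, hc⟩ := exists_strongOff G hmin v
  refine hG (extend G v c hc (hall_of_size G v c ?_))
  intro u hu
  rw [card_neighborFinset_eq_degree]
  have hadj : G.Adj v u := (G.mem_neighborFinset v u).mp hu
  have hNv : G.neighborFinset v = {u} := by
    refine (Finset.eq_of_subset_of_card_le (Finset.singleton_subset_iff.mpr hu) ?_).symm
    rw [card_neighborFinset_eq_degree]
    simpa using Nat.lt_succ_iff.mp hlt
  have hvd : G.degree v = 1 := by
    rw [← card_neighborFinset_eq_degree, hNv, card_singleton]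
  have hd1 : 1 ≤ G.degree u := by
    rw [← card_neighborFinset_eq_degree]
    exact card_pos.mpr ⟨v, (G.mem_neighborFinset u v).mpr hadj.symm⟩
  have hd6 : G.degree u ≤ 6 := by
    have := hore v u hadj
    omega
  have hU : (Uset G v).card ≤ G.degree u - 1 := by
    refine (card_Uset_le G v).trans ?_
    rw [hNv, Finset.sum_singleton]
  have hX : (Xset G v u).card ≤ (G.degree u - 1) * (6 - G.degree u) := by
    refine (card_Xset_le G v u).trans ?_
    have hcard : ((G.neighborFinset u).erase v).card = G.degree u - 1 := by
      rw [Finset.card_erase_of_mem ((G.mem_neighborFinset u v).mpr hadj.symm),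
        card_neighborFinset_eq_degree]
    refine le_trans (Finset.sum_le_card_nsmul _ _ (6 - G.degree u) ?_) ?_
    · intro x hx
      rw [Finset.mem_erase, mem_neighborFinset] at hx
      have := hore u x hx.2
      omega
    · rw [smul_eq_mul, hcard]
  have hF : (Fset G v u).card ≤ 12 := by
    have h1 := card_le_card (Fset_subset G v u hadj)
    have h2 := card_union_le (Uset G v) (Xset G v u)
    have h3 : (G.degree u - 1) + (G.degree u - 1) * (6 - G.degree u) ≤ 12 := by
      have h4 := hd1
      have h5 := hd6
      interval_cases h : (G.degree u) <;> norm_num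
    omega
  have himg : ((Fset G v u).image c).card ≤ 12 := (card_image_le).trans hF
  rw [card_Aset]
  omega


lemma degree_le_four
    (hore : ∀ u v : V, G.Adj u v → G.degree u + G.degree v ≤ 7)
    (hG : ¬ G.HasStrongColoring 13)
    (hmin : ∀ H : G.Subgraph, H ≠ ⊤ → H.coe.HasStrongColoring 13)
    (hdeg2 : ∀ w : V, 2 ≤ G.degree w) (v : V) :
    G.degree v ≤ 4 := by
  classical
  by_contra h5'
  push_neg at h5'
  have hNvpos : 0 < (G.neighborFinset v).card := by
    rw [card_neighborFinset_eq_degree]; omega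
  obtain ⟨u₀, hu₀⟩ := Finset.card_pos.mp hNvpos
  have hdv : G.degree v = 5 := by
    have h1 := hore v u₀ ((G.mem_neighborFinset v u₀).mp hu₀)
    have h2 := hdeg2 u₀
    omega
  have hNv5 : (G.neighborFinset v).card = 5 := by
    rw [card_neighborFinset_eq_degree, hdv]
  have hu2 : ∀ u ∈ G.neighborFinset v, G.degree u = 2 := by
    intro u hu
    have h1 := hore u v ((G.mem_neighborFinset v u).mp hu).symm
    have h2 := hdeg2 u
    omega
  have hvmemNu : ∀ u ∈ G.neighborFinset v, v ∈ G.neighborFinset u := by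
    intro u hu
    exact (G.mem_neighborFinset u v).mpr ((G.mem_neighborFinset v u).mp hu).symm
  obtain ⟨c, hc⟩ := exists_strongOff G hmin v
  -- generic bounds
  have hUb : (Uset G v).card ≤ 5 := by
    refine (card_Uset_le G v).trans ?_
    refine le_trans (Finset.sum_le_card_nsmul _ _ 1 ?_) ?_
    · intro w hw
      rw [hu2 w hw]
    · rw [smul_eq_mul, hNv5]
  have hXb : ∀ u ∈ G.neighborFinset v, (Xset G v u).card ≤ 4 := by
    intro u hu
    refine (card_Xset_le G v u).trans ?_
    refine le_trans (Finset.sum_le_card_nsmul _ _ 4 ?_) ?_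
    · intro x hx
      rw [Finset.mem_erase, mem_neighborFinset] at hx
      have h1 := hore u x hx.2
      have h2 := hu2 u hu
      omega
    · rw [smul_eq_mul, Finset.card_erase_of_mem (hvmemNu u hu),
        card_neighborFinset_eq_degree, hu2 u hu]
  have hA4 : ∀ u ∈ G.neighborFinset v, 4 ≤ (Aset G c v u).card := by
    intro u hu
    rw [card_Aset]
    have h1 := card_le_card (Fset_subset G v u ((G.mem_neighborFinset v u).mp hu))
    have h2 := card_union_le (Uset G v) (Xset G v u)
    have h3 := hXb u hu
    have h4 := card_image_le (s := Fset G v u) (f := c)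
    omega
  -- dichotomy
  by_cases hallc : ∀ s : Finset V, s ⊆ G.neighborFinset v →
      s.card ≤ (s.biUnion (fun u => Aset G c v u)).card
  · exact hG (extend G v c hc hallc)
  push_neg at hallc
  obtain ⟨s, hs, hlt⟩ := hallc
  -- s must be all of N(v), and the union B has exactly 4 colors
  have hsne : s.Nonempty := by
    rcases s.eq_empty_or_nonempty with rfl | h
    · simp at hlt
    · exact h
  obtain ⟨w₀, hw₀⟩ := hsne
  have hw₀N : w₀ ∈ G.neighborFinset v := hs hw₀
  have hsub0 : Aset G c v w₀ ⊆ s.biUnion (fun u => Aset G c v u) :=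
    subset_biUnion_of_mem _ hw₀
  have hge4 : 4 ≤ (s.biUnion (fun u => Aset G c v u)).card :=
    le_trans (hA4 w₀ hw₀N) (card_le_card hsub0)
  have hseq : s = G.neighborFinset v := by
    refine Finset.eq_of_subset_of_card_le hs ?_
    have := card_le_card hs
    omega
  subst hseq
  set B := (G.neighborFinset v).biUnion (fun u => Aset G c v u) with hB
  have hBcard : B.card = 4 := by
    have h1 : (G.neighborFinset v).card = 5 := hNv5
    omega
  have hAeq : ∀ u ∈ G.neighborFinset v, Aset G c v u = B := by
    intro u hu
    refine Finset.eq_of_subset_of_card_le (subset_biUnion_of_mem _ hu) ?_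
    rw [hBcard]
    exact hA4 u hu
  have himgF : ∀ u ∈ G.neighborFinset v, (Fset G v u).image c = Finset.univ \ B := by
    intro u hu
    have h1 := hAeq u hu
    rw [Aset] at h1
    rw [← h1, Finset.sdiff_sdiff_eq_self (subset_univ _)]
  have himgFcard : ∀ u ∈ G.neighborFinset v, ((Fset G v u).image c).card = 9 := by
    intro u hu
    rw [himgF u hu, card_sdiff_of_subset (subset_univ _), hBcard]
    simp
  -- the second neighbor function
  have hex : ∀ u : V, ∃ x, u ∈ G.neighborFinset v → (G.neighborFinset u).erase v = {x} := by
    intro u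
    by_cases hu : u ∈ G.neighborFinset v
    · have hcard : ((G.neighborFinset u).erase v).card = 1 := by
        rw [Finset.card_erase_of_mem (hvmemNu u hu), card_neighborFinset_eq_degree, hu2 u hu]
      obtain ⟨x, hx⟩ := Finset.card_eq_one.mp hcard
      exact ⟨x, fun _ => hx⟩
    · exact ⟨v, fun h => absurd h hu⟩
  choose xf hxf using hex
  have hxmem : ∀ u ∈ G.neighborFinset v, xf u ∈ (G.neighborFinset u).erase v := by
    intro u hu
    rw [hxf u hu]
    exact mem_singleton_self _
  have hxadj : ∀ u ∈ G.neighborFinset v, G.Adj u (xf u) := by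
    intro u hu
    have := hxmem u hu
    rw [Finset.mem_erase, mem_neighborFinset] at this
    exact this.2
  have hxnev : ∀ u ∈ G.neighborFinset v, xf u ≠ v := by
    intro u hu
    have := hxmem u hu
    rw [Finset.mem_erase] at this
    exact this.1
  have hNu : ∀ u ∈ G.neighborFinset v, G.neighborFinset u = {v, xf u} := by
    intro u hu
    have h1 : insert v ((G.neighborFinset u).erase v) = G.neighborFinset u :=
      Finset.insert_erase (hvmemNu u hu)
    rw [← h1, hxf u hu]
  have hXeq : ∀ u ∈ G.neighborFinset v, Xset G v u = G.incidenceFinset (xf u) \ {s(u, xf u)} := by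
    intro u hu
    rw [Xset, hxf u hu, Finset.singleton_biUnion]
  have hunev : ∀ u ∈ G.neighborFinset v, u ≠ v := by
    intro u hu
    exact fun h => G.irrefl (h ▸ (G.mem_neighborFinset v u).mp hu)
  -- color decomposition
  have hsubimg : ∀ u ∈ G.neighborFinset v, (Fset G v u).image c ⊆
      (Uset G v).image c ∪ (Xset G v u).image c := by
    intro u hu
    rw [← image_union]
    exact image_subset_image (Fset_subset G v u ((G.mem_neighborFinset v u).mp hu))
  have hUX : ∀ u ∈ G.neighborFinset v, ((Uset G v).image c).card = 5 ∧ ((Xset G v u).image c).card = 4 ∧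
      Disjoint ((Uset G v).image c) ((Xset G v u).image c) ∧
      (Uset G v).image c ∪ (Xset G v u).image c = Finset.univ \ B := by
    intro u hu
    have h9 := himgFcard u hu
    have hiU : ((Uset G v).image c).card ≤ 5 := card_image_le.trans hUb
    have hiX : ((Xset G v u).image c).card ≤ 4 := card_image_le.trans (hXb u hu)
    have hunion_ge : 9 ≤ ((Uset G v).image c ∪ (Xset G v u).image c).card := by
      rw [← h9]
      exact card_le_card (hsubimg u hu)
    have hci := card_union_add_card_inter ((Uset G v).image c) ((Xset G v u).image c)
    have hinter : (((Uset G v).image c) ∩ ((Xset G v u).image c)).card = 0 := by omega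
    have hdisj : Disjoint ((Uset G v).image c) ((Xset G v u).image c) := by
      rw [Finset.disjoint_iff_inter_eq_empty]
      exact Finset.card_eq_zero.mp hinter
    have hueq : (Uset G v).image c ∪ (Xset G v u).image c = Finset.univ \ B := by
      rw [← himgF u hu]
      refine (Finset.eq_of_subset_of_card_le (hsubimg u hu) ?_).symm
      rw [h9]
      omega
    exact ⟨by omega, by omega, hdisj, hueq⟩
  have hdx : ∀ u ∈ G.neighborFinset v, G.degree (xf u) = 5 := by
    intro u hu
    have h4 : ((Xset G v u).image c).card = 4 := (hUX u hu).2.1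
    have hle : 4 ≤ (Xset G v u).card := le_trans (le_of_eq h4.symm) card_image_le
    rw [hXeq u hu, card_incidence_sdiff G (hxadj u hu)] at hle
    have h1 := hore u (xf u) (hxadj u hu)
    have h2 := hu2 u hu
    omega
  have himgXeq : ∀ u ∈ G.neighborFinset v, (Xset G v u).image c = (Finset.univ \ B) \ (Uset G v).image c := by
    intro u hu
    rw [← (hUX u hu).2.2.2]
    exact (Finset.union_sdiff_cancel_left (hUX u hu).2.2.1).symm
  have hxdist : ∀ u ∈ G.neighborFinset v, ∀ u' ∈ G.neighborFinset v, u ≠ u' → xf u ≠ xf u' := by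
    intro u hu u' hu' hne heq
    have hgU : s(u', xf u') ∈ Uset G v := by
      rw [Uset, mem_biUnion]
      refine ⟨u', hu', ?_⟩
      rw [mem_sdiff, mem_incidenceFinset']
      refine ⟨⟨hxadj u' hu', Sym2.mem_mk_left _ _⟩, ?_⟩
      rw [Finset.mem_singleton, Sym2.eq_iff]
      push_neg
      constructor
      · intro h; exact absurd h (hunev u' hu')
      · intro _; exact hxnev u' hu'
    have hgX : s(u', xf u') ∈ Xset G v u := by
      rw [hXeq u hu, mem_sdiff, mem_incidenceFinset']
      refine ⟨⟨hxadj u' hu', ?_⟩, ?_⟩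
      · rw [heq]; exact Sym2.mem_mk_right _ _
      · rw [Finset.mem_singleton, Sym2.eq_iff]
        push_neg
        constructor
        · intro h; exact absurd h hne.symm
        · intro h
          have h1 := hu2 u' hu'
          have h2 := hdx u hu
          rw [h] at h1
          omega
    exact Finset.disjoint_left.mp (hUX u hu).2.2.1
      (mem_image_of_mem c hgU) (mem_image_of_mem c hgX)
  have hUseteq : Uset G v = (G.neighborFinset v).image (fun w => s(w, xf w)) := by
    apply Finset.Subset.antisymm
    · intro f hf
      rw [Uset, mem_biUnion] at hf
      obtain ⟨w, hw, hf⟩ := hf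
      rw [mem_sdiff, mem_incidenceFinset'] at hf
      obtain ⟨⟨hfe, hwf⟩, hfne⟩ := hf
      rw [Finset.mem_singleton] at hfne
      obtain ⟨z, hz, rfl⟩ := edge_repr G hfe hwf
      have hzN : z ∈ G.neighborFinset w := (G.mem_neighborFinset w z).mpr hz
      rw [hNu w hw, Finset.mem_insert, Finset.mem_singleton] at hzN
      rcases hzN with rfl | rfl
      · exact absurd (Sym2.eq_swap) hfne
      · exact mem_image_of_mem _ hw
    · intro f hf
      obtain ⟨w, hw, rfl⟩ := Finset.mem_image.mp hf
      rw [Uset, mem_biUnion]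
      refine ⟨w, hw, ?_⟩
      rw [mem_sdiff, mem_incidenceFinset']
      refine ⟨⟨hxadj w hw, Sym2.mem_mk_left _ _⟩, ?_⟩
      rw [Finset.mem_singleton, Sym2.eq_iff]
      push_neg
      constructor
      · intro h; exact absurd h (hunev w hw)
      · intro _; exact hxnev w hw
  -- pick two neighbors
  obtain ⟨u₁, hu₁, u₂, hu₂, hne12⟩ := Finset.one_lt_card.mp (by rw [hNv5]; norm_num)
  -- non-seeing of the two second edges
  have hdeguxne : ∀ u ∈ G.neighborFinset v, ∀ u' ∈ G.neighborFinset v, u ≠ xf u' := by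
    intro u hu u' hu' h
    have h1 := hu2 u hu
    have h2 := hdx u' hu'
    rw [h] at h1
    omega
  have hnadj_ux : ∀ u ∈ G.neighborFinset v, ∀ u' ∈ G.neighborFinset v, u ≠ u' → ¬ G.Adj u (xf u') := by
    intro u hu u' hu' hne h
    have : xf u' ∈ G.neighborFinset u := (G.mem_neighborFinset u _).mpr h
    rw [hNu u hu, Finset.mem_insert, Finset.mem_singleton] at this
    rcases this with h1 | h1
    · exact hxnev u' hu' h1
    · exact hxdist u' hu' u hu hne.symm h1
  have hnadj_uu : ∀ u ∈ G.neighborFinset v, ∀ u' ∈ G.neighborFinset v, u ≠ u' → ¬ G.Adj u u' := by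
    intro u hu u' hu' hne h
    have : u' ∈ G.neighborFinset u := (G.mem_neighborFinset u _).mpr h
    rw [hNu u hu, Finset.mem_insert, Finset.mem_singleton] at this
    rcases this with h1 | h1
    · exact hunev u' hu' h1
    · exact hdeguxne u' hu' u hu h1
  have hnadj_xx : ∀ u ∈ G.neighborFinset v, ∀ u' ∈ G.neighborFinset v, ¬ G.Adj (xf u) (xf u') := by
    intro u hu u' hu' h
    have h1 := hore (xf u) (xf u') h
    rw [hdx u hu, hdx u' hu'] at h1
    omega
  have hnosee : ¬ G.Sees s(u₁, xf u₁) s(u₂, xf u₂) := by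
    rintro ⟨α, hα, β, hβ, hαβ⟩
    rw [Sym2.mem_iff] at hα hβ
    rcases hα with h | h <;> rw [h] at hαβ <;>
      (rcases hβ with h' | h' <;> rw [h'] at hαβ) <;> rcases hαβ with h2 | h2
    · exact hne12 h2
    · exact hnadj_uu u₁ hu₁ u₂ hu₂ hne12 h2
    · exact hdeguxne u₁ hu₁ u₂ hu₂ h2
    · exact hnadj_ux u₁ hu₁ u₂ hu₂ hne12 h2
    · exact hdeguxne u₂ hu₂ u₁ hu₁ h2.symm
    · exact hnadj_ux u₂ hu₂ u₁ hu₁ hne12.symm h2.symm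
    · exact hxdist u₁ hu₁ u₂ hu₂ hne12 h2
    · exact hnadj_xx u₁ hu₁ u₂ hu₂ h2
  -- the Y sets
  set Yf : V → Finset (Sym2 V) := fun u =>
    ((G.neighborFinset (xf u)).erase u).biUnion
      (fun y => G.incidenceFinset y \ {s(xf u, y)}) with hYf
  have hYcard : ∀ u ∈ G.neighborFinset v, (Yf u).card ≤ 4 := by
    intro u hu
    rw [hYf]
    refine card_biUnion_le.trans ?_
    refine le_trans (Finset.sum_le_card_nsmul _ _ 1 ?_) ?_
    · intro y hy
      rw [Finset.mem_erase, mem_neighborFinset] at hy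
      rw [card_incidence_sdiff G hy.2]
      have h1 := hore (xf u) y hy.2
      have h2 := hdx u hu
      omega
    · rw [smul_eq_mul,
        Finset.card_erase_of_mem ((G.mem_neighborFinset _ _).mpr (hxadj u hu).symm),
        card_neighborFinset_eq_degree, hdx u hu]
  -- pick a fresh color a
  set Forb : Finset (Fin 13) := (Xset G v u₁).image c ∪ (Yf u₁).image c ∪ (Yf u₂).image c
    with hForb
  have hForbcard : Forb.card ≤ 12 := by
    rw [hForb]
    refine le_trans (card_union_le _ _) ?_
    refine le_trans (Nat.add_le_add_right (card_union_le _ _) _) ?_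
    have h1 : ((Xset G v u₁).image c).card ≤ 4 := le_of_eq (hUX u₁ hu₁).2.1
    have h2 : ((Yf u₁).image c).card ≤ 4 := card_image_le.trans (hYcard u₁ hu₁)
    have h3 : ((Yf u₂).image c).card ≤ 4 := card_image_le.trans (hYcard u₂ hu₂)
    omega
  obtain ⟨a, ha⟩ : (Finset.univ \ Forb).Nonempty := by
    rw [← Finset.card_pos, card_sdiff_of_subset (subset_univ _)]
    have : (Finset.univ : Finset (Fin 13)).card = 13 := by simp
    omega
  rw [mem_sdiff] at ha
  have haF : a ∉ Forb := ha.2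
  -- edges seen by a second edge land in Xset ∪ Yf
  have hseen : ∀ u ∈ G.neighborFinset v, ∀ f ∈ G.edgeSet, v ∉ f → f ≠ s(u, xf u) → G.Sees s(u, xf u) f →
      f ∈ Xset G v u ∪ Yf u := by
    intro u hu f hfe hvf hfne hsee
    by_cases hxinf : xf u ∈ f
    · refine mem_union_left _ ?_
      rw [hXeq u hu, mem_sdiff, mem_incidenceFinset']
      exact ⟨⟨hfe, hxinf⟩, by rwa [Finset.mem_singleton]⟩
    have huinf : u ∉ f := by
      intro huf
      obtain ⟨z, hz, rfl⟩ := edge_repr G hfe huf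
      have hzN : z ∈ G.neighborFinset u := (G.mem_neighborFinset u z).mpr hz
      rw [hNu u hu, Finset.mem_insert, Finset.mem_singleton] at hzN
      rcases hzN with rfl | rfl
      · exact hvf (Sym2.mem_mk_right _ _)
      · exact hxinf (Sym2.mem_mk_right _ _)
    obtain ⟨α, hα, β, hβ, hαβ⟩ := hsee
    rw [Sym2.mem_iff] at hα
    have hβu : β ≠ u := fun h => huinf (h ▸ hβ)
    have hβx : β ≠ xf u := fun h => hxinf (h ▸ hβ)
    have hβv : β ≠ v := fun h => hvf (h ▸ hβ)
    rcases hα with h | h <;> rw [h] at hαβ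
    · rcases hαβ with h2 | h2
      · exact absurd h2.symm hβu
      · have hmem : β ∈ G.neighborFinset u := (G.mem_neighborFinset u β).mpr h2
        rw [hNu u hu, Finset.mem_insert, Finset.mem_singleton] at hmem
        rcases hmem with h3 | h3
        · exact absurd h3 hβv
        · exact absurd h3 hβx
    · rcases hαβ with h2 | h2
      · exact absurd h2.symm hβx
      · refine mem_union_right _ ?_
        rw [hYf, mem_biUnion]
        refine ⟨β, ?_, ?_⟩
        · rw [Finset.mem_erase, mem_neighborFinset]
          exact ⟨hβu, h2⟩
        · rw [mem_sdiff, mem_incidenceFinset']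
          refine ⟨⟨hfe, hβ⟩, ?_⟩
          rw [Finset.mem_singleton]
          intro heq
          exact hxinf (heq ▸ Sym2.mem_mk_left _ _)
  -- the recoloring
  set c' : Sym2 V → Fin 13 := fun f =>
    if f = s(u₁, xf u₁) ∨ f = s(u₂, xf u₂) then a else c f with hc'
  have hg12ne : s(u₁, xf u₁) ≠ s(u₂, xf u₂) := by
    rw [ne_eq, Sym2.eq_iff]
    push_neg
    constructor
    · intro h; exact absurd h hne12
    · intro h; exact absurd h (hdeguxne u₁ hu₁ u₂ hu₂)
  have hc'g1 : c' s(u₁, xf u₁) = a := by rw [hc']; simp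
  have hc'g2 : c' s(u₂, xf u₂) = a := by rw [hc']; simp
  have hc'other : ∀ f, f ≠ s(u₁, xf u₁) → f ≠ s(u₂, xf u₂) → c' f = c f := by
    intro f h1 h2
    rw [hc']
    simp [h1, h2]
  -- colors of edges seeing g₁ or g₂ avoid a
  have hforb : ∀ f ∈ G.edgeSet, v ∉ f → f ≠ s(u₁, xf u₁) → f ≠ s(u₂, xf u₂) →
      (G.Sees s(u₁, xf u₁) f ∨ G.Sees s(u₂, xf u₂) f) → c f ≠ a := by
    intro f hfe hvf hne1 hne2 hsee heq
    apply haF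
    rw [hForb]
    rcases hsee with h | h
    · have := hseen u₁ hu₁ f hfe hvf hne1 h
      rw [mem_union] at this
      rcases this with h1 | h1
      · exact mem_union_left _ (mem_union_left _ (heq ▸ mem_image_of_mem c h1))
      · exact mem_union_left _ (mem_union_right _ (heq ▸ mem_image_of_mem c h1))
    · have := hseen u₂ hu₂ f hfe hvf hne2 h
      rw [mem_union] at this
      rcases this with h1 | h1
      · -- image c (Xset u₂) = image c (Xset u₁)
        have himg2 : (Xset G v u₂).image c = (Xset G v u₁).image c := by
          rw [himgXeq u₂ hu₂, himgXeq u₁ hu₁]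
        refine mem_union_left _ (mem_union_left _ ?_)
        rw [← himg2]
        exact heq ▸ mem_image_of_mem c h1
      · exact mem_union_right _ (heq ▸ mem_image_of_mem c h1)
  -- c' is strong away from v
  have hc'strong : StrongOff G c' v := by
    intro e he f hf hve hvf hnef hsee
    by_cases he1 : e = s(u₁, xf u₁) ∨ e = s(u₂, xf u₂) <;>
      by_cases hf1 : f = s(u₁, xf u₁) ∨ f = s(u₂, xf u₂)
    · rcases he1 with rfl | rfl <;> rcases hf1 with rfl | rfl
      · exact absurd rfl hnef
      · exact absurd hsee hnosee
      · exact absurd (sees_symm G hsee) hnosee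
      · exact absurd rfl hnef
    · push_neg at hf1
      rcases he1 with rfl | rfl
      · rw [hc'g1, hc'other f hf1.1 hf1.2]
        exact fun h => hforb f hf hvf hf1.1 hf1.2 (Or.inl hsee) h.symm
      · rw [hc'g2, hc'other f hf1.1 hf1.2]
        exact fun h => hforb f hf hvf hf1.1 hf1.2 (Or.inr hsee) h.symm
    · push_neg at he1
      rcases hf1 with rfl | rfl
      · rw [hc'g1, hc'other e he1.1 he1.2]
        exact hforb e he hve he1.1 he1.2 (Or.inl (sees_symm G hsee))
      · rw [hc'g2, hc'other e he1.1 he1.2]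
        exact hforb e he hve he1.1 he1.2 (Or.inr (sees_symm G hsee))
    · push_neg at he1
      push_neg at hf1
      rw [hc'other e he1.1 he1.2, hc'other f hf1.1 hf1.2]
      exact hc e he f hf hve hvf hnef hsee
  -- with c', every pending edge has 5 available colors
  refine hG (extend G v c' hc'strong (hall_of_size G v c' ?_))
  intro w hw
  rw [hNv5, card_Aset]
  suffices himg8 : ((Fset G v w).image c').card ≤ 8 by omega
  have hsub : (Fset G v w).image c' ⊆ (Uset G v).image c' ∪ (Xset G v w).image c' := by
    rw [← image_union]
    exact image_subset_image (Fset_subset G v w ((G.mem_neighborFinset v w).mp hw))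
  have hXuntouched : (Xset G v w).image c' = (Xset G v w).image c := by
    apply Finset.image_congr
    intro f hf
    simp only [Finset.mem_coe] at hf
    have hfprop : ∀ u' ∈ G.neighborFinset v, f ≠ s(u', xf u') ∨ w = u' := by
      intro u' hu'
      by_cases hwu : w = u'
      · exact Or.inr hwu
      left
      intro heq
      rw [hXeq w hw, mem_sdiff, mem_incidenceFinset'] at hf
      have hxwf : xf w ∈ f := hf.1.2
      rw [heq, Sym2.mem_iff] at hxwf
      rcases hxwf with h | h
      · exact hdeguxne u' hu' w hw h.symm
      · exact hxdist w hw u' hu' hwu h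
    apply hc'other
    · rcases hfprop u₁ hu₁ with h | h
      · exact h
      · subst h
        rw [hXeq _ hw, mem_sdiff, Finset.mem_singleton] at hf
        exact hf.2
    · rcases hfprop u₂ hu₂ with h | h
      · exact h
      · subst h
        rw [hXeq _ hw, mem_sdiff, Finset.mem_singleton] at hf
        exact hf.2
  have hXcard' : ((Xset G v w).image c').card ≤ 4 := by
    rw [hXuntouched, (hUX w hw).2.1]
  have hUcard' : ((Uset G v).image c').card ≤ 4 := by
    have hsubins : (Uset G v).image c' ⊆
        insert a ((((G.neighborFinset v).erase u₁).erase u₂).image (fun w' => c' s(w', xf w'))) := by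
      intro y hy
      rw [Finset.mem_image] at hy
      obtain ⟨f, hf, rfl⟩ := hy
      rw [hUseteq, Finset.mem_image] at hf
      obtain ⟨w', hw', rfl⟩ := hf
      by_cases h1 : w' = u₁
      · subst h1; rw [hc'g1]; exact mem_insert_self _ _
      by_cases h2 : w' = u₂
      · subst h2; rw [hc'g2]; exact mem_insert_self _ _
      refine Finset.mem_insert_of_mem (Finset.mem_image_of_mem _ ?_)
      rw [Finset.mem_erase, Finset.mem_erase]
      exact ⟨h2, h1, hw'⟩
    refine le_trans (card_le_card hsubins) ?_
    refine le_trans (card_insert_le _ _) ?_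
    have h1 : ((((G.neighborFinset v).erase u₁).erase u₂).image (fun w' => c' s(w', xf w'))).card ≤ 3 := by
      refine card_image_le.trans ?_
      rw [Finset.card_erase_of_mem, Finset.card_erase_of_mem hu₁, hNv5]
      rw [Finset.mem_erase]
      exact ⟨hne12.symm, hu₂⟩
    omega
  calc ((Fset G v w).image c').card
      ≤ ((Uset G v).image c' ∪ (Xset G v w).image c').card := card_le_card hsub
    _ ≤ ((Uset G v).image c').card + ((Xset G v w).image c').card := card_union_le _ _
    _ ≤ 8 := by omega

end StrongProofAux

theorem statement0 {V : Type*} [Fintype V] [DecidableEq V]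
    (G : SimpleGraph V) [DecidableRel G.Adj]
    (hore : ∀ u v : V, G.Adj u v → G.degree u + G.degree v ≤ 7)
    (hG : ¬ G.HasStrongColoring 13)
    (hmin : ∀ H : G.Subgraph, H ≠ ⊤ → H.coe.HasStrongColoring 13) :
    ∀ v : V, 2 ≤ G.degree v ∧ G.degree v ≤ 4 := by
  have hdeg2 : ∀ w : V, 2 ≤ G.degree w := fun w =>
    StrongProofAux.degree_ge_two G hore hG hmin w
  intro v
  exact ⟨hdeg2 v, StrongProofAux.degree_le_four G hore hG hmin hdeg2 v⟩
end

section
/- Let G be a finite simple graph with Ore-degree θ(G) ≤ 7 such that G admits no strong edge-coloring with 13 colors but every proper subgraph of G admits a strong edge-coloring with 13 colors. Then every vertex of degree 2 in G is adjacent to two vertices of degree 4. -/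
open Finset Function

theorem Finset.notMem_image_update {β γ : Type*} [DecidableEq β] [DecidableEq γ]
    {T : Finset β} {c : β → γ} {s : β} {a b : γ} (hs : s ∈ T → b ≠ a)
    (hT : b ∉ (T.erase s).image c) : b ∉ T.image (Function.update c s a) := by
  simp only [Finset.mem_image, Finset.mem_erase, not_exists, not_and] at hT ⊢
  intro f hf hfb
  by_cases hfs : f = s
  · subst hfs
    exact hs hf (by simpa using hfb.symm)
  · exact hT f ⟨hfs, hf⟩ (by rwa [Function.update_of_ne hfs] at hfb)

theorem Set.InjOn.apply_notMem_image_erase {β γ : Type*} [DecidableEq β] [DecidableEq γ]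
    {T : Finset β} {c : β → γ} (h : Set.InjOn c T) {s : β} (hs : s ∈ T) :
    c s ∉ (T.erase s).image c := by
  simp only [Finset.mem_image, Finset.mem_erase, not_exists, not_and]
  exact fun f hf hfc => hf.1 (h hf.2 hs hfc)

theorem Finset.notMem_image_of_subset {β γ : Type*} [DecidableEq γ] {T T' : Finset β}
    {c : β → γ} {b : γ} (h : b ∉ T.image c) (hT : T' ⊆ T) : b ∉ T'.image c :=
  fun h' => h (Finset.image_subset_image hT h')

theorem Fin.exists_notMem_of_card_lt {n : ℕ} {s : Finset (Fin n)} (h : #s < n) : ∃ a, a ∉ s := by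
  obtain ⟨a, -, ha⟩ := exists_mem_notMem_of_card_lt_card (s := s) (t := univ)
    (by rwa [card_univ, Fintype.card_fin])
  exact ⟨a, ha⟩

theorem Fin.exists_notMem_image_ne {β : Type*} {n : ℕ} {T : Finset β} (c : β → Fin n) (b : Fin n)
    (h : #T + 1 < n) : ∃ a ∉ T.image c, a ≠ b := by
  obtain ⟨a, ha⟩ := Fin.exists_notMem_of_card_lt (s := insert b (T.image c))
    ((card_insert_le _ _).trans_lt (by have := card_image_le (s := T) (f := c); omega))
  exact ⟨a, fun h => ha (mem_insert_of_mem h), fun h => ha (h ▸ mem_insert_self _ _)⟩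

theorem Fin.le_card_add_card_of_forall_notMem {n : ℕ} {s t : Finset (Fin n)}
    (h : ∀ a, a ∉ s → a ∈ t) : n ≤ #s + #t := by
  calc n = #(univ : Finset (Fin n)) := by simp
    _ ≤ #(s ∪ t) := card_le_card fun a _ => by by_cases ha : a ∈ s <;> simp [ha, h]
    _ ≤ #s + #t := card_union_le s t

theorem Finset.injOn_of_card_le_card_image {β γ : Type*} [DecidableEq γ] {T : Finset β}
    {c : β → γ} (h : #T ≤ #(T.image c)) : Set.InjOn c T :=
  card_image_iff.1 (le_antisymm card_image_le h)

namespace SimpleGraph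

variable {V α : Type*} {G : SimpleGraph V}

theorem Sees.symm {e f : Sym2 V} (h : G.Sees e f) : G.Sees f e := by
  obtain ⟨a, ha, b, hb, hab⟩ := h
  exact ⟨b, hb, a, ha, hab.imp Eq.symm Adj.symm⟩

theorem sees_of_mem {e f : Sym2 V} {a : V} (he : a ∈ e) (hf : a ∈ f) : G.Sees e f :=
  ⟨a, he, a, hf, Or.inl rfl⟩

theorem sees_of_adj {e f : Sym2 V} {a b : V} (he : a ∈ e) (hf : b ∈ f) (hab : G.Adj a b) :
    G.Sees e f :=
  ⟨a, he, b, hf, Or.inr hab⟩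

theorem ne_mk_of_notMem {f : Sym2 V} {v : V} (h : v ∉ f) (z : V) : f ≠ s(v, z) :=
  fun hf => h (hf ▸ Sym2.mem_mk_left v z)

theorem IsStrongEdgeColoring.extend_spanningCoe {H : G.Subgraph} {c : Sym2 H.verts → α}
    (hc : H.coe.IsStrongEdgeColoring c) (d : Sym2 V → α) :
    H.spanningCoe.IsStrongEdgeColoring (extend (Sym2.map (↑)) c d) := by
  have hinj : Injective (Sym2.map ((↑) : H.verts → V)) := Sym2.map.injective Subtype.val_injective
  have hlift : ∀ e ∈ H.spanningCoe.edgeSet, ∃ e' ∈ H.coe.edgeSet, Sym2.map (↑) e' = e := by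
    intro e he
    induction e using Sym2.ind with | _ a b => ?_
    have hab : H.Adj a b := he
    exact ⟨s(⟨a, H.edge_vert hab⟩, ⟨b, H.edge_vert hab.symm⟩), hab, rfl⟩
  intro e he f hf hef hs
  obtain ⟨e', he', rfl⟩ := hlift e he
  obtain ⟨f', hf', rfl⟩ := hlift f hf
  rw [hinj.extend_apply, hinj.extend_apply]
  refine hc e' he' f' hf' (fun h => hef (h ▸ rfl)) ?_
  obtain ⟨p, hp, q, hq, hpq⟩ := hs
  obtain ⟨p', hp', rfl⟩ := Sym2.mem_map.1 hp
  obtain ⟨q', hq', rfl⟩ := Sym2.mem_map.1 hq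
  exact ⟨p', hp', q', hq', hpq.imp (fun h => Subtype.val_injective h) id⟩

theorem spanningCoe_deleteVerts_top_singleton (v : V) :
    ((⊤ : G.Subgraph).deleteVerts {v}).spanningCoe = G.deleteIncidenceSet v := by
  ext a b
  simp only [Subgraph.spanningCoe_adj, Subgraph.induce_adj, Subgraph.verts_top, Set.mem_sdiff,
    Set.mem_univ, Set.mem_singleton_iff, true_and, Subgraph.top_adj, deleteIncidenceSet_adj]
  tauto

theorem deleteVerts_top_singleton_ne_top (v : V) : (⊤ : G.Subgraph).deleteVerts {v} ≠ ⊤ := by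
  intro h
  have := congrArg (v ∈ ·.verts) h
  simp at this

theorem degree_pos_and_le_of_adj [Fintype V] [DecidableRel G.Adj] {v u : V} {θ : ℕ}
    (hvu : G.Adj v u) (hθ : G.degree v + G.degree u ≤ θ) :
    0 < G.degree u ∧ G.degree u ≤ θ - G.degree v :=
  ⟨G.degree_pos_iff_exists_adj u |>.2 ⟨v, hvu.symm⟩, by omega⟩

/-- The edges in `S` are treated as uncolored, but they still count for `G.Sees`. -/
def IsStrongEdgeColoringOff (G : SimpleGraph V) (S : Set (Sym2 V)) (c : Sym2 V → α) : Prop :=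
  ∀ e ∈ G.edgeSet, ∀ f ∈ G.edgeSet, e ∉ S → f ∉ S → e ≠ f → G.Sees e f → c e ≠ c f

namespace IsStrongEdgeColoringOff

variable {S S' : Set (Sym2 V)} {c : Sym2 V → α}

theorem mono (h : G.IsStrongEdgeColoringOff S c) (hS : S ⊆ S') :
    G.IsStrongEdgeColoringOff S' c :=
  fun e he f hf heS hfS => h e he f hf (fun h => heS (hS h)) (fun h => hfS (hS h))

theorem isStrongEdgeColoring (h : G.IsStrongEdgeColoringOff ∅ c) : G.IsStrongEdgeColoring c :=
  fun e he f hf => h e he f hf (Set.notMem_empty e) (Set.notMem_empty f)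

end IsStrongEdgeColoringOff

theorem IsStrongEdgeColoring.isStrongEdgeColoringOff_incidenceSet {v : V} {c : Sym2 V → α}
    (hc : (G.deleteIncidenceSet v).IsStrongEdgeColoring c) :
    G.IsStrongEdgeColoringOff (G.incidenceSet v) c := by
  have hdel : ∀ e ∈ G.edgeSet, e ∉ G.incidenceSet v → e ∈ (G.deleteIncidenceSet v).edgeSet :=
    fun e he hev => by simp [deleteIncidenceSet, he, hev]
  have hnot : ∀ e ∈ G.edgeSet, e ∉ G.incidenceSet v → ∀ a ∈ e, a ≠ v :=
    fun e he hev a ha hav => hev ⟨he, hav ▸ ha⟩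
  intro e he f hf hev hfv hef hs
  refine hc e (hdel e he hev) f (hdel f hf hfv) hef ?_
  obtain ⟨p, hp, q, hq, hpq⟩ := hs
  refine ⟨p, hp, q, hq, hpq.imp id fun hadj => ?_⟩
  exact deleteIncidenceSet_adj.2 ⟨hadj, hnot e he hev p hp, hnot f hf hfv q hq⟩

section Finite

variable [Fintype V] [DecidableEq V] [DecidableRel G.Adj] [DecidableEq α]

open Classical in
noncomputable def seers (G : SimpleGraph V) [DecidableRel G.Adj] (e : Sym2 V) :
    Finset (Sym2 V) :=
  G.edgeFinset.filter fun f => f ≠ e ∧ G.Sees f e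

open Classical in
noncomputable def seersOff (G : SimpleGraph V) [DecidableRel G.Adj] (S : Set (Sym2 V))
    (e : Sym2 V) : Finset (Sym2 V) :=
  (G.seers e).filter (· ∉ S)

variable {S : Set (Sym2 V)} {e f : Sym2 V}

theorem mem_seers : f ∈ G.seers e ↔ f ∈ G.edgeSet ∧ f ≠ e ∧ G.Sees f e := by
  simp [seers]

theorem mem_seersOff : f ∈ G.seersOff S e ↔ f ∈ G.seers e ∧ f ∉ S := by
  simp [seersOff]

theorem seersOff_insert (t : Sym2 V) : G.seersOff (insert t S) e = (G.seersOff S e).erase t := by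
  ext f
  simp only [mem_seersOff, mem_erase, Set.mem_insert_iff]
  tauto

theorem seersOff_insert_self : G.seersOff (insert e S) e = G.seersOff S e := by
  rw [seersOff_insert, erase_eq_of_notMem fun h => (mem_seers.1 (mem_seersOff.1 h).1).2.1 rfl]

namespace IsStrongEdgeColoringOff

variable {e' s t : Sym2 V} {c : Sym2 V → α}

theorem update {a : α} (h : G.IsStrongEdgeColoringOff (insert e S) c)
    (ha : a ∉ (G.seersOff S e).image c) :
    G.IsStrongEdgeColoringOff S (Function.update c e a) := by
  have hfree : ∀ f ∈ G.edgeSet, f ∉ S → f ≠ e → G.Sees f e → c f ≠ a := fun f hf hfS hfe hs hc =>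
    ha (mem_image.2 ⟨f, mem_seersOff.2 ⟨mem_seers.2 ⟨hf, hfe, hs⟩, hfS⟩, hc⟩)
  intro f hf g hg hfS hgS hfg hs
  by_cases hfe : f = e <;> by_cases hge : g = e
  · exact absurd (hfe.trans hge.symm) hfg
  · subst hfe
    rw [Function.update_self, Function.update_of_ne hge]
    exact (hfree g hg hgS hge hs.symm).symm
  · subst hge
    rw [Function.update_self, Function.update_of_ne hfe]
    exact hfree f hf hfS hfe hs
  · rw [Function.update_of_ne hfe, Function.update_of_ne hge]
    exact h f hf g hg (by simp [hfe, hfS]) (by simp [hge, hgS]) hfg hs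

theorem isStrongEdgeColoring_update_update {A B : α} (h : G.IsStrongEdgeColoringOff {e, e'} c)
    (hA : A ∉ (G.seersOff {e, e'} e).image c) (hB : B ∉ (G.seersOff {e, e'} e').image c)
    (hAB : A ≠ B) :
    G.IsStrongEdgeColoring (Function.update (Function.update c e A) e' B) := by
  have h₁ : G.IsStrongEdgeColoringOff (insert e' ∅) (Function.update c e A) := by
    rw [← Set.singleton_def]
    exact h.update (seersOff_insert_self (G := G) ▸ hA)
  refine (h₁.update (Finset.notMem_image_update (fun _ => hAB.symm) ?_)).isStrongEdgeColoring
  refine fun hmem => hB (image_subset_image (fun f hf => ?_) hmem)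
  obtain ⟨hfe, hf⟩ := mem_erase.1 hf
  refine mem_seersOff.2 ⟨(mem_seersOff.1 hf).1, ?_⟩
  rintro (rfl | rfl)
  exacts [hfe rfl, (mem_seers.1 (mem_seersOff.1 hf).1).2.1 rfl]

theorem exists_of_recolor_common_seer (hc : G.IsStrongEdgeColoringOff {e, e'} c)
    (hs : s ∈ G.seersOff {e, e'} e) (hs' : s ∈ G.seersOff {e, e'} e')
    (hinj : Set.InjOn c (G.seersOff {e, e'} e')) {A a : α}
    (hA : A ∉ (G.seersOff {e, e'} e).image c) (ha : a ∉ (G.seersOff {e, e'} s).image c)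
    (hac : a ≠ c s) (haA : a ≠ A) : ∃ c' : Sym2 V → α, G.IsStrongEdgeColoring c' :=
  ⟨_, ((hc.mono (Set.subset_insert s _)).update ha).isStrongEdgeColoring_update_update
    (notMem_image_update (fun _ => haA.symm) (notMem_image_of_subset hA (erase_subset _ _)))
    (notMem_image_update (fun _ => hac.symm) (hinj.apply_notMem_image_erase hs'))
    (fun h => hA (h ▸ mem_image_of_mem c hs))⟩

theorem exists_of_recolor_private_seer (hc : G.IsStrongEdgeColoringOff {e, e'} c)
    (hs : s ∈ G.seersOff {e, e'} e) (hs' : s ∉ G.seersOff {e, e'} e')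
    (hinj : Set.InjOn c (G.seersOff {e, e'} e)) {B a : α}
    (hB : B ∉ (G.seersOff {e, e'} e).image c) (hB' : B ∉ (G.seersOff {e, e'} e').image c)
    (ha : a ∉ (G.seersOff {e, e'} s).image c) (hac : a ≠ c s) :
    ∃ c' : Sym2 V → α, G.IsStrongEdgeColoring c' :=
  ⟨_, ((hc.mono (Set.subset_insert s _)).update ha).isStrongEdgeColoring_update_update
    (notMem_image_update (fun _ => hac.symm) (hinj.apply_notMem_image_erase hs))
    (notMem_image_update (fun h => absurd h hs') (notMem_image_of_subset hB' (erase_subset _ _)))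
    (fun h => hB (h ▸ mem_image_of_mem c hs))⟩

/-- `s` and `t` exchange colors; then `e'` takes the old color of `s`, which now sits on `t`,
an edge `e'` does not see, and `e` takes `A`. -/
theorem exists_of_swap (hc : G.IsStrongEdgeColoringOff {e, e'} c)
    (hs : s ∈ G.seersOff {e, e'} e) (hs' : s ∈ G.seersOff {e, e'} e')
    (ht : t ∈ G.seersOff {e, e'} e) (ht' : t ∉ G.seersOff {e, e'} e')
    (hts : t ∈ G.seersOff {e, e'} s) (hst : s ∈ G.seersOff {e, e'} t)
    (hinj' : Set.InjOn c (G.seersOff {e, e'} e')) (hinjs : Set.InjOn c (G.seersOff {e, e'} s))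
    (hinjt : Set.InjOn c (G.seersOff {e, e'} t)) {A : α}
    (hA : A ∉ (G.seersOff {e, e'} e).image c) :
    ∃ c' : Sym2 V → α, G.IsStrongEdgeColoring c' := by
  obtain ⟨hts_seer, htP⟩ := mem_seersOff.1 hts
  obtain ⟨htE, hts_ne, hts_sees⟩ := mem_seers.1 hts_seer
  have hsE : s ∈ G.edgeSet := (mem_seers.1 (mem_seersOff.1 hs).1).1
  have hcst : c s ≠ c t :=
    hc s hsE t htE (mem_seersOff.1 hs).2 htP (Ne.symm hts_ne) hts_sees.symm
  have hAs : A ≠ c s := fun h => hA (h ▸ mem_image_of_mem c hs)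
  have hAt : A ≠ c t := fun h => hA (h ▸ mem_image_of_mem c ht)
  have h₁ : G.IsStrongEdgeColoringOff (insert t {e, e'}) (Function.update c s (c t)) :=
    (hc.mono ((Set.subset_insert t _).trans (Set.subset_insert s _))).update
      (by rw [seersOff_insert]; exact hinjs.apply_notMem_image_erase hts)
  have h₂ := h₁.update (a := c s)
    (notMem_image_update (fun _ => hcst) (hinjt.apply_notMem_image_erase hst))
  refine ⟨_, h₂.isStrongEdgeColoring_update_update (A := A) (B := c s)
    (notMem_image_update (fun _ => hAs) (notMem_image_update (fun _ => hAt)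
      (notMem_image_of_subset hA ((erase_subset _ _).trans (erase_subset _ _)))))
    (notMem_image_update (fun h => absurd h ht') (notMem_image_update (fun _ => hcst)
      (notMem_image_of_subset (hinj'.apply_notMem_image_erase hs')
        (by rw [erase_right_comm]; exact erase_subset _ _)))) hAs⟩

end IsStrongEdgeColoringOff

variable {a b p : V}

def seersVia (G : SimpleGraph V) [DecidableRel G.Adj] (a b : V) : Finset (Sym2 V) :=
  (G.incidenceFinset a).erase s(a, b) ∪
    ((G.neighborFinset a).erase b).biUnion fun x => (G.incidenceFinset x).erase s(a, x)

theorem mem_seersVia_of_mem (hf : f ∈ G.edgeSet) (ha : a ∈ f) (hne : f ≠ s(a, b)) :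
    f ∈ G.seersVia a b :=
  mem_union_left _ (mem_erase.2 ⟨hne, (G.mem_incidenceFinset a f).2 ⟨hf, ha⟩⟩)

theorem mem_seersVia_of_adj (hf : f ∈ G.edgeSet) (hp : p ∈ f) (hap : G.Adj a p) (hpb : p ≠ b)
    (ha : a ∉ f) : f ∈ G.seersVia a b := by
  refine mem_union_right _ (mem_biUnion.2 ⟨p, mem_erase.2 ⟨hpb, by simpa using hap⟩, ?_⟩)
  exact mem_erase.2 ⟨fun h => ha (h ▸ Sym2.mem_mk_left a p), (G.mem_incidenceFinset p f).2 ⟨hf, hp⟩⟩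

theorem seers_subset_seersVia_union : G.seers s(a, b) ⊆ G.seersVia a b ∪ G.seersVia b a := by
  intro f hf
  obtain ⟨hfE, hne, p, hp, q, hq, hpq⟩ := mem_seers.1 hf
  by_cases ha : a ∈ f
  · exact mem_union_left _ (mem_seersVia_of_mem hfE ha hne)
  by_cases hb : b ∈ f
  · exact mem_union_right _ (mem_seersVia_of_mem hfE hb (Sym2.eq_swap ▸ hne))
  have hpa : p ≠ a := fun h => ha (h ▸ hp)
  have hpb : p ≠ b := fun h => hb (h ▸ hp)
  rcases Sym2.mem_iff.1 hq with rfl | rfl <;> rcases hpq with rfl | hadj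
  · exact absurd rfl hpa
  · exact mem_union_left _ (mem_seersVia_of_adj hfE hp hadj.symm hpb ha)
  · exact absurd rfl hpb
  · exact mem_union_right _ (mem_seersVia_of_adj hfE hp hadj.symm hpa hb)

theorem card_seersVia_le (hab : G.Adj a b) :
    #(G.seersVia a b) ≤
      (G.degree a - 1) + ∑ x ∈ (G.neighborFinset a).erase b, (G.degree x - 1) := by
  have hcard : ∀ x, G.Adj a x → #((G.incidenceFinset a).erase s(a, x)) = G.degree a - 1 := by
    intro x hax
    rw [card_erase_of_mem ((G.mem_incidenceFinset a _).2 ⟨hax, Sym2.mem_mk_left a x⟩),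
      card_incidenceFinset_eq_degree]
  refine (card_union_le _ _).trans (add_le_add (hcard b hab).le (card_biUnion_le.trans ?_))
  refine sum_le_sum fun x hx => ?_
  have hax : G.Adj a x := by simpa using (mem_erase.1 hx).2
  rw [card_erase_of_mem ((G.mem_incidenceFinset x _).2 ⟨hax, Sym2.mem_mk_right a x⟩),
    card_incidenceFinset_eq_degree]

theorem card_seers_add_card_inter_le (hab : G.Adj a b) :
    #(G.seers s(a, b)) + #(G.seersVia a b ∩ G.seersVia b a) ≤
      (G.degree a - 1) + ∑ x ∈ (G.neighborFinset a).erase b, (G.degree x - 1) +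
      ((G.degree b - 1) + ∑ x ∈ (G.neighborFinset b).erase a, (G.degree x - 1)) := by
  calc #(G.seers s(a, b)) + #(G.seersVia a b ∩ G.seersVia b a)
      ≤ #(G.seersVia a b ∪ G.seersVia b a) + #(G.seersVia a b ∩ G.seersVia b a) :=
        Nat.add_le_add_right (card_le_card seers_subset_seersVia_union) _
    _ = #(G.seersVia a b) + #(G.seersVia b a) := card_union_add_card_inter _ _
    _ ≤ _ := add_le_add (card_seersVia_le hab) (card_seersVia_le hab.symm)

theorem card_seersOff_add_card_le {t : Finset (Sym2 V)}
    (ht : t ⊆ G.seers e) (htS : ∀ f ∈ t, f ∈ S) : #(G.seersOff S e) + #t ≤ #(G.seers e) := by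
  have hsub : G.seersOff S e ⊆ G.seers e \ t := fun f hf =>
    mem_sdiff.2 ⟨(mem_seersOff.1 hf).1, fun h => (mem_seersOff.1 hf).2 (htS f h)⟩
  have := card_le_card hsub
  rw [card_sdiff_of_subset ht] at this
  have := card_le_card ht
  omega

theorem sum_degree_sub_one_le {k : ℕ} (hab : G.Adj a b) (hk : ∀ x, G.Adj a x → G.degree x - 1 ≤ k) :
    ∑ x ∈ (G.neighborFinset a).erase b, (G.degree x - 1) ≤ (G.degree a - 1) * k := by
  have hcard : #((G.neighborFinset a).erase b) = G.degree a - 1 := by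
    rw [card_erase_of_mem (by simpa using hab), card_neighborFinset_eq_degree]
  refine (sum_le_card_nsmul _ _ k fun x hx => hk x ?_).trans_eq (by rw [hcard, smul_eq_mul])
  simpa using (mem_erase.1 hx).2

variable {v u w x y : V} {c : Sym2 V → Fin 13}

theorem eq_or_eq_of_neighborFinset_eq_pair (hNv : G.neighborFinset v = {u, w})
    (h : G.Adj v x) : x = u ∨ x = w := by
  have : x ∈ G.neighborFinset v := by simpa using h
  simpa [hNv] using this

theorem adj_of_neighborFinset_eq_pair (hNv : G.neighborFinset v = {u, w}) :
    G.Adj v u ∧ G.Adj v w := by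
  have hu : u ∈ G.neighborFinset v := hNv ▸ mem_insert_self u {w}
  have hw : w ∈ G.neighborFinset v := hNv ▸ mem_insert_of_mem (mem_singleton_self w)
  exact ⟨by simpa using hu, by simpa using hw⟩

theorem degree_eq_two_of_neighborFinset_eq_pair (hNv : G.neighborFinset v = {u, w})
    (huw : u ≠ w) : G.degree v = 2 := by
  rw [← card_neighborFinset_eq_degree, hNv, card_pair huw]

theorem incidenceSet_subset_pair (hNv : G.neighborFinset v = {u, w}) :
    G.incidenceSet v ⊆ {s(v, u), s(v, w)} := by
  rintro e ⟨he, hve⟩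
  obtain ⟨x, rfl⟩ := Sym2.mem_iff_exists.1 hve
  rcases eq_or_eq_of_neighborFinset_eq_pair hNv he with rfl | rfl <;> simp

theorem card_seersOff_add_card_inter_le (hNv : G.neighborFinset v = {u, w}) (huw : u ≠ w)
    (hore : ∀ a b, G.Adj a b → G.degree a + G.degree b ≤ 7) :
    #(G.seersOff {s(v, u), s(v, w)} s(v, u)) + #(G.seersVia v u ∩ G.seersVia u v) ≤
      (G.degree u - 1) + (G.degree w - 1) + (G.degree u - 1) * (6 - G.degree u) := by
  obtain ⟨hvu, hvw⟩ := adj_of_neighborFinset_eq_pair hNv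
  have hvw_seer : s(v, w) ∈ G.seers s(v, u) :=
    mem_seers.2 ⟨hvw, Sym2.congr_right.not.2 huw.symm,
      sees_of_mem (Sym2.mem_mk_left v w) (Sym2.mem_mk_left v u)⟩
  have hoff := card_seersOff_add_card_le (S := {s(v, u), s(v, w)}) (t := {s(v, w)})
    (singleton_subset_iff.2 hvw_seer) (by simp)
  have hseers := card_seers_add_card_inter_le hvu
  have hsum : ∑ x ∈ (G.neighborFinset v).erase u, (G.degree x - 1) = G.degree w - 1 := by
    rw [hNv, erase_insert (by simpa using huw), sum_singleton]
  have hore_u := sum_degree_sub_one_le hvu.symm (k := 6 - G.degree u)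
    fun x hx => by have := hore u x hx; omega
  rw [card_singleton] at hoff
  rw [hsum, degree_eq_two_of_neighborFinset_eq_pair hNv huw] at hseers
  omega

theorem card_seersOff_spoke_le (hNv : G.neighborFinset v = {u, w}) (huw : u ≠ w)
    (hore : ∀ a b, G.Adj a b → G.degree a + G.degree b ≤ 7) (hu : G.degree u = 5)
    (hux : G.Adj u x) (hxv : x ≠ v) :
    #(G.seersOff {s(v, u), s(v, w)} s(u, x)) ≤
      6 + (G.degree x - 1) + ∑ z ∈ (G.neighborFinset x).erase u, (G.degree z - 1) := by
  obtain ⟨hvu, hvw⟩ := adj_of_neighborFinset_eq_pair hNv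
  have hv : v ∉ s(u, x) := by simp [hvu.ne, hxv.symm]
  have hoff := card_seersOff_add_card_le (S := {s(v, u), s(v, w)}) (t := {s(v, u), s(v, w)})
    (e := s(u, x)) (insert_subset_iff.2 ⟨mem_seers.2 ⟨hvu, (ne_mk_of_notMem hv u).symm,
      sees_of_mem (Sym2.mem_mk_right v u) (Sym2.mem_mk_left u x)⟩,
      singleton_subset_iff.2 (mem_seers.2 ⟨hvw, (ne_mk_of_notMem hv w).symm,
      sees_of_adj (Sym2.mem_mk_left v w) (Sym2.mem_mk_left u x) hvu⟩)⟩) (by simp)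
  have hseers := card_seers_add_card_inter_le hux
  have hore_u := sum_degree_sub_one_le hux (k := 1)
    fun z hz => by have := hore u z hz; omega
  rw [card_pair (Sym2.congr_right.not.2 huw)] at hoff
  rw [hu] at hseers hore_u
  omega

theorem card_seersOff_far_le (hNv : G.neighborFinset v = {u, w})
    (hore : ∀ a b, G.Adj a b → G.degree a + G.degree b ≤ 7) (hu : G.degree u = 5)
    (hux : G.Adj u x) (hxv : x ≠ v) (hNx : G.neighborFinset x = {u, y}) (hyu : y ≠ u)
    (hyv : y ≠ v) (hy : G.degree y = 5) :
    #(G.seersOff {s(v, u), s(v, w)} s(x, y)) ≤ 12 := by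
  obtain ⟨hvu, -⟩ := adj_of_neighborFinset_eq_pair hNv
  have hxy : G.Adj x y := (adj_of_neighborFinset_eq_pair hNx).2
  have hv : v ∉ s(x, y) := by simp [hxv.symm, hyv.symm]
  have hoff := card_seersOff_add_card_le (S := {s(v, u), s(v, w)}) (t := {s(v, u)})
    (e := s(x, y)) (singleton_subset_iff.2 (mem_seers.2 ⟨hvu, (ne_mk_of_notMem hv u).symm,
      sees_of_adj (Sym2.mem_mk_right v u) (Sym2.mem_mk_left x y) hux⟩)) (by simp)
  have hseers := card_seers_add_card_inter_le hxy
  have hsum : ∑ z ∈ (G.neighborFinset x).erase y, (G.degree z - 1) = G.degree u - 1 := by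
    rw [hNx, pair_comm, erase_insert (by simpa using hyu), sum_singleton]
  have hore_y := sum_degree_sub_one_le hxy.symm (k := 1)
    fun z hz => by have := hore y z hz; omega
  rw [card_singleton] at hoff
  rw [hsum, degree_eq_two_of_neighborFinset_eq_pair hNx hyu.symm, hu, hy] at hseers
  omega

theorem mem_seersOff_pair {f g : Sym2 V} (hf : f ∈ G.edgeSet) (hv : v ∉ f) (hfg : f ≠ g)
    (hs : G.Sees f g) : f ∈ G.seersOff {s(v, u), s(v, w)} g :=
  mem_seersOff.2 ⟨mem_seers.2 ⟨hf, hfg, hs⟩, by simp [ne_mk_of_notMem hv u, ne_mk_of_notMem hv w]⟩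

theorem exists_adj_ne_of_two_le_degree (h : 2 ≤ G.degree u) (v : V) : ∃ x, G.Adj u x ∧ x ≠ v := by
  obtain ⟨x, hx⟩ : ((G.neighborFinset u).erase v).Nonempty := card_pos.1 <|
    (card_neighborFinset_eq_degree G u ▸ pred_card_le_card_erase).trans_lt' (by omega)
  exact ⟨x, (G.mem_neighborFinset u x).1 (mem_erase.1 hx).2, (mem_erase.1 hx).1⟩

theorem card_seersOff_spoke_le_eleven (hNv : G.neighborFinset v = {u, w}) (huw : u ≠ w)
    (hore : ∀ a b, G.Adj a b → G.degree a + G.degree b ≤ 7) (hu : G.degree u = 5)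
    (hux : G.Adj u x) (hxv : x ≠ v) : #(G.seersOff {s(v, u), s(v, w)} s(u, x)) ≤ 11 := by
  have hT := card_seersOff_spoke_le hNv huw hore hu hux hxv
  have hsum := sum_degree_sub_one_le hux.symm (k := 6 - G.degree x)
    fun z hz => by have := hore x z hz; omega
  have hx : G.degree x ≤ 2 := by have := hore u x hux; omega
  have hx0 : 0 < G.degree x := G.degree_pos_iff_exists_adj x |>.2 ⟨u, hux.symm⟩
  interval_cases h : G.degree x <;> omega

theorem exists_of_eleven_le_card_seersOff_spoke (hNv : G.neighborFinset v = {u, w})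
    (huw : u ≠ w) (hore : ∀ a b, G.Adj a b → G.degree a + G.degree b ≤ 7) (hu : G.degree u = 5)
    (hux : G.Adj u x) (hxv : x ≠ v) (h : 11 ≤ #(G.seersOff {s(v, u), s(v, w)} s(u, x))) :
    ∃ y, y ≠ u ∧ G.neighborFinset x = {u, y} ∧ G.degree y = 5 := by
  have hT := card_seersOff_spoke_le hNv huw hore hu hux hxv
  have hux' : u ∈ G.neighborFinset x := by simpa using hux.symm
  have hcard : #((G.neighborFinset x).erase u) = G.degree x - 1 := by
    rw [card_erase_of_mem hux', card_neighborFinset_eq_degree]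
  have hx := hore u x hux
  obtain hx0 | ⟨y, hy⟩ : (G.neighborFinset x).erase u = ∅ ∨
      ∃ y, (G.neighborFinset x).erase u = {y} := by
    rcases Nat.lt_or_ge #((G.neighborFinset x).erase u) 1 with h1 | h1
    · exact Or.inl (card_eq_zero.1 (by omega))
    · exact Or.inr (card_eq_one.1 (by omega))
  · rw [hx0, sum_empty] at hT
    omega
  have hyu : y ≠ u := (mem_erase.1 (hy ▸ mem_singleton_self y)).1
  have hxy : G.Adj x y := (G.mem_neighborFinset x y).1 (mem_erase.1 (hy ▸ mem_singleton_self y)).2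
  rw [hy, sum_singleton] at hT
  rw [hy, card_singleton] at hcard
  have := hore x y hxy
  exact ⟨y, hyu, by rw [← insert_erase hux', hy], by omega⟩

theorem spoke_mem_seersOff (hNv : G.neighborFinset v = {u, w}) (hux : G.Adj u x) (hxv : x ≠ v) :
    s(u, x) ∈ G.seersOff {s(v, u), s(v, w)} s(v, u) ∧
      s(u, x) ∈ G.seersOff {s(v, u), s(v, w)} s(v, w) := by
  obtain ⟨hvu, -⟩ := adj_of_neighborFinset_eq_pair hNv
  have hv : v ∉ s(u, x) := by simp [hvu.ne, hxv.symm]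
  exact ⟨mem_seersOff_pair hux hv (ne_mk_of_notMem hv u)
      (sees_of_mem (Sym2.mem_mk_left u x) (Sym2.mem_mk_right v u)),
    mem_seersOff_pair hux hv (ne_mk_of_notMem hv w)
      (sees_of_adj (Sym2.mem_mk_left u x) (Sym2.mem_mk_left v w) hvu.symm)⟩

theorem hasStrongColoring_of_card_seersOff_le_eleven (hNv : G.neighborFinset v = {u, w})
    (huw : u ≠ w) (hore : ∀ a b, G.Adj a b → G.degree a + G.degree b ≤ 7) (hu : G.degree u = 5)
    (hc : G.IsStrongEdgeColoringOff {s(v, u), s(v, w)} c)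
    (hTu : #(G.seersOff {s(v, u), s(v, w)} s(v, u)) ≤ 11)
    (hinj : Set.InjOn c (G.seersOff {s(v, u), s(v, w)} s(v, w))) : G.HasStrongColoring 13 := by
  obtain ⟨x, hux, hxv⟩ := exists_adj_ne_of_two_le_degree (by omega : 2 ≤ G.degree u) v
  obtain ⟨hsu, hsw⟩ := spoke_mem_seersOff hNv hux hxv
  have hTx := card_seersOff_spoke_le_eleven hNv huw hore hu hux hxv
  obtain ⟨a, ha, hac⟩ := Fin.exists_notMem_image_ne
    (T := G.seersOff {s(v, u), s(v, w)} s(u, x)) c (c s(u, x)) (by omega)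
  obtain ⟨A, hA, hAa⟩ := Fin.exists_notMem_image_ne
    (T := G.seersOff {s(v, u), s(v, w)} s(v, u)) c a (by omega)
  exact hc.exists_of_recolor_common_seer hsu hsw hinj hA ha hac hAa.symm

theorem not_sees_of_neighborFinset_eq_pair (hNv : G.neighborFinset v = {u, w})
    (hNx : G.neighborFinset x = {u, y}) (huw : u ≠ w) (hux : G.Adj u x) (hxv : x ≠ v)
    (hxw : x ≠ w) (hyu : y ≠ u) (hyw : y ≠ w) (hyw' : ¬ G.Adj y w) :
    ¬ G.Sees s(x, y) s(v, w) := by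
  have hyv : y ≠ v := by
    rintro rfl
    exact (eq_or_eq_of_neighborFinset_eq_pair hNv (adj_of_neighborFinset_eq_pair hNx).2.symm).elim
      hux.ne' hxw
  rintro ⟨p, hp, q, hq, hpq⟩
  obtain rfl | rfl := Sym2.mem_iff.1 hp <;> obtain rfl | rfl := Sym2.mem_iff.1 hq
  · exact hpq.elim hxv fun h => (eq_or_eq_of_neighborFinset_eq_pair hNv h.symm).elim hux.ne' hxw
  · exact hpq.elim hxw fun h => (eq_or_eq_of_neighborFinset_eq_pair hNx h).elim
      (fun h => huw h.symm) fun h => hyw h.symm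
  · exact hpq.elim hyv fun h => (eq_or_eq_of_neighborFinset_eq_pair hNv h.symm).elim hyu hyw
  · exact hpq.elim hyw hyw'

theorem hasStrongColoring_of_far_edge (hNv : G.neighborFinset v = {u, w}) (huw : u ≠ w)
    (hore : ∀ a b, G.Adj a b → G.degree a + G.degree b ≤ 7) (hu : G.degree u = 5)
    (hw : G.degree w = 5) (hc : G.IsStrongEdgeColoringOff {s(v, u), s(v, w)} c) {γ : Fin 13}
    (hγu : γ ∉ (G.seersOff {s(v, u), s(v, w)} s(v, u)).image c)
    (hγw : γ ∉ (G.seersOff {s(v, u), s(v, w)} s(v, w)).image c)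
    (hinju : Set.InjOn c (G.seersOff {s(v, u), s(v, w)} s(v, u)))
    (hinjw : Set.InjOn c (G.seersOff {s(v, u), s(v, w)} s(v, w)))
    (hux : G.Adj u x) (hxv : x ≠ v) (hinjx : Set.InjOn c (G.seersOff {s(v, u), s(v, w)} s(u, x)))
    (hNx : G.neighborFinset x = {u, y}) (hyu : y ≠ u) (hyw : y ≠ w) (hy : G.degree y = 5) :
    G.HasStrongColoring 13 := by
  have hxy : G.Adj x y := (adj_of_neighborFinset_eq_pair hNx).2
  have hxw : x ≠ w := by
    rintro rfl
    have := hore u x hux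
    omega
  have hyv : y ≠ v := by
    rintro rfl
    exact (eq_or_eq_of_neighborFinset_eq_pair hNv hxy.symm).elim hux.ne' hxw
  have hnot_sees := not_sees_of_neighborFinset_eq_pair hNv hNx huw hux hxv hxw hyu hyw
    fun h => by have := hore _ _ h; omega
  have hv : v ∉ s(x, y) := by simp [hxv.symm, hyv.symm]
  have hne : s(x, y) ≠ s(u, x) := by simp [hux.ne', hyu]
  obtain ⟨hsu, hsw⟩ := spoke_mem_seersOff hNv hux hxv
  have htu : s(x, y) ∈ G.seersOff {s(v, u), s(v, w)} s(v, u) := mem_seersOff_pair hxy hv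
    (ne_mk_of_notMem hv u) (sees_of_adj (Sym2.mem_mk_left x y) (Sym2.mem_mk_right v u) hux.symm)
  have htw : s(x, y) ∉ G.seersOff {s(v, u), s(v, w)} s(v, w) :=
    fun h => hnot_sees (mem_seers.1 (mem_seersOff.1 h).1).2.2
  have hts := mem_seersOff_pair (u := u) (w := w) hxy hv hne
    (sees_of_mem (Sym2.mem_mk_left x y) (Sym2.mem_mk_right u x))
  have hv' : v ∉ s(u, x) := by simp [(adj_of_neighborFinset_eq_pair hNv).1.ne, hxv.symm]
  have hst := mem_seersOff_pair (u := u) (w := w) hux hv' hne.symm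
    (sees_of_mem (Sym2.mem_mk_right u x) (Sym2.mem_mk_left x y))
  by_cases hrecolor : ∃ δ ∉ (G.seersOff {s(v, u), s(v, w)} s(x, y)).image c, δ ≠ c s(x, y)
  · obtain ⟨δ, hδ, hδc⟩ := hrecolor
    exact hc.exists_of_recolor_private_seer htu htw hinju hγu hγw hδ hδc
  push Not at hrecolor
  have hTe := card_seersOff_far_le hNv hore hu hux hxv hNx hyu hyv hy
  have hSe := Fin.le_card_add_card_of_forall_notMem (t := {c s(x, y)})
    fun δ hδ => mem_singleton.2 (hrecolor δ hδ)
  rw [card_singleton] at hSe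
  exact hc.exists_of_swap hsu hsw htu htw hts hst hinjw hinjx
    (injOn_of_card_le_card_image (by omega)) hγu

theorem hasStrongColoring_of_missing_common_color (hNv : G.neighborFinset v = {u, w})
    (huw : u ≠ w) (hore : ∀ a b, G.Adj a b → G.degree a + G.degree b ≤ 7) (hu : G.degree u = 5)
    (hw : G.degree w = 5) (hc : G.IsStrongEdgeColoringOff {s(v, u), s(v, w)} c) {γ : Fin 13}
    (hγu : γ ∉ (G.seersOff {s(v, u), s(v, w)} s(v, u)).image c)
    (hγw : γ ∉ (G.seersOff {s(v, u), s(v, w)} s(v, w)).image c)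
    (hinju : Set.InjOn c (G.seersOff {s(v, u), s(v, w)} s(v, u)))
    (hinjw : Set.InjOn c (G.seersOff {s(v, u), s(v, w)} s(v, w)))
    (hdisj : G.seersVia v u ∩ G.seersVia u v = ∅) : G.HasStrongColoring 13 := by
  obtain ⟨hvu, hvw⟩ := adj_of_neighborFinset_eq_pair hNv
  obtain ⟨x, hux, hxv⟩ := exists_adj_ne_of_two_le_degree (by omega : 2 ≤ G.degree u) v
  obtain ⟨hsu, hsw⟩ := spoke_mem_seersOff hNv hux hxv
  by_cases hrecolor : ∃ a ∉ (G.seersOff {s(v, u), s(v, w)} s(u, x)).image c,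
      a ≠ c s(u, x) ∧ a ≠ γ
  · obtain ⟨a, ha, hac, haγ⟩ := hrecolor
    exact hc.exists_of_recolor_common_seer hsu hsw hinjw hγu ha hac haγ
  push Not at hrecolor
  have hTx := card_seersOff_spoke_le_eleven hNv huw hore hu hux hxv
  have hSx := Fin.le_card_add_card_of_forall_notMem
    (s := (G.seersOff {s(v, u), s(v, w)} s(u, x)).image c) (t := {c s(u, x), γ}) fun a ha => by
      by_cases hac : a = c s(u, x)
      · simp [hac]
      · simp [hrecolor a ha hac]
  have := card_le_two (a := c s(u, x)) (b := γ)
  have := card_image_le (s := G.seersOff {s(v, u), s(v, w)} s(u, x)) (f := c)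
  obtain ⟨y, hyu, hNx, hy⟩ :=
    exists_of_eleven_le_card_seersOff_spoke hNv huw hore hu hux hxv (by omega)
  have hxy := (adj_of_neighborFinset_eq_pair hNx).2
  have hyw : y ≠ w := by
    -- `s(x, w)` would be counted twice in the tight bound on the edges seen by `s(v, u)`
    rintro rfl
    refine (eq_empty_iff_forall_notMem.1 hdisj) s(x, y) (mem_inter.2 ⟨?_, ?_⟩)
    · exact mem_seersVia_of_adj hxy (Sym2.mem_mk_right x y) hvw huw.symm
        (by simp [hxv.symm, hvw.ne])
    · exact mem_seersVia_of_adj hxy (Sym2.mem_mk_left x y) hux hxv (by simp [hux.ne, hyu.symm])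
  exact hasStrongColoring_of_far_edge hNv huw hore hu hw hc hγu hγw hinju hinjw hux hxv
    (injOn_of_card_le_card_image (by omega)) hNx hyu hyw hy

theorem hasStrongColoring_of_degree_ne_four (hNv : G.neighborFinset v = {u, w}) (huw : u ≠ w)
    (hore : ∀ a b, G.Adj a b → G.degree a + G.degree b ≤ 7) (hu4 : G.degree u ≠ 4)
    (hc : G.IsStrongEdgeColoringOff {s(v, u), s(v, w)} c) : G.HasStrongColoring 13 := by
  obtain ⟨hvu, hvw⟩ := adj_of_neighborFinset_eq_pair hNv
  have hdv := degree_eq_two_of_neighborFinset_eq_pair hNv huw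
  obtain ⟨hu0, hu⟩ := degree_pos_and_le_of_adj hvu (hore v u hvu)
  obtain ⟨hw0, hw⟩ := degree_pos_and_le_of_adj hvw (hore v w hvw)
  rw [hdv] at hu hw
  have hU := card_seersOff_add_card_inter_le hNv huw hore
  have hW := card_seersOff_add_card_inter_le (pair_comm u w ▸ hNv) huw.symm hore
  rw [Set.pair_comm] at hW
  have hSu := card_image_le (s := G.seersOff {s(v, u), s(v, w)} s(v, u)) (f := c)
  have hSw := card_image_le (s := G.seersOff {s(v, u), s(v, w)} s(v, w)) (f := c)
  by_cases hdirect : ∃ A ∉ (G.seersOff {s(v, u), s(v, w)} s(v, u)).image c,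
      ∃ B ∉ (G.seersOff {s(v, u), s(v, w)} s(v, w)).image c, A ≠ B
  · obtain ⟨A, hA, B, hB, hAB⟩ := hdirect
    exact ⟨_, hc.isStrongEdgeColoring_update_update hA hB hAB⟩
  push Not at hdirect
  obtain ⟨γ, hγu⟩ := Fin.exists_notMem_of_card_lt
    (s := (G.seersOff {s(v, u), s(v, w)} s(v, u)).image c) (by
      interval_cases G.degree u <;> interval_cases G.degree w <;> omega)
  by_cases hmissing : ∃ B, B ∉ (G.seersOff {s(v, u), s(v, w)} s(v, w)).image c
  · obtain ⟨B, hB⟩ := hmissing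
    obtain rfl := hdirect γ hγu B hB
    have hSu' := Fin.le_card_add_card_of_forall_notMem (t := {γ}) fun A hA =>
      mem_singleton.2 (hdirect A hA γ hB)
    have hSw' := Fin.le_card_add_card_of_forall_notMem (t := {γ}) fun B hB' =>
      mem_singleton.2 (hdirect γ hγu B hB').symm
    rw [card_singleton] at hSu' hSw'
    obtain ⟨hu5, hw5⟩ : G.degree u = 5 ∧ G.degree w = 5 := by
      interval_cases G.degree u <;> interval_cases G.degree w <;> omega
    rw [hu5, hw5] at hU hW
    exact hasStrongColoring_of_missing_common_color hNv huw hore hu5 hw5 hc hγu hB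
      (injOn_of_card_le_card_image (by omega)) (injOn_of_card_le_card_image (by omega))
      (card_eq_zero.1 (by omega))
  · push Not at hmissing
    have hSw' := Fin.le_card_add_card_of_forall_notMem
      (s := (G.seersOff {s(v, u), s(v, w)} s(v, w)).image c) (t := ∅)
      fun B hB => absurd (hmissing B) hB
    rw [card_empty] at hSw'
    obtain ⟨hu5, hw4⟩ : G.degree u = 5 ∧ G.degree w = 4 := by
      interval_cases G.degree u <;> interval_cases G.degree w <;> omega
    rw [hu5, hw4] at hU hW
    exact hasStrongColoring_of_card_seersOff_le_eleven hNv huw hore hu5 hc (by omega)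
      (injOn_of_card_le_card_image (by omega))

theorem exists_neighborFinset_eq_pair (hv : G.degree v = 2) (hvu : G.Adj v u) :
    ∃ w, u ≠ w ∧ G.neighborFinset v = {u, w} := by
  obtain ⟨a, b, hab, hN⟩ := card_eq_two.1 ((card_neighborFinset_eq_degree G v).trans hv)
  have hu : u ∈ ({a, b} : Finset V) := hN ▸ (G.mem_neighborFinset v u).2 hvu
  rcases mem_insert.1 hu with rfl | hu
  · exact ⟨b, hab, hN⟩
  · rw [mem_singleton.1 hu]
    exact ⟨a, hab.symm, hN.trans (pair_comm a b)⟩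

end Finite

end SimpleGraph

theorem statement1 {V : Type*} [Fintype V] [DecidableEq V]
    (G : SimpleGraph V) [DecidableRel G.Adj]
    (hore : ∀ u v : V, G.Adj u v → G.degree u + G.degree v ≤ 7)
    (hG : ¬ G.HasStrongColoring 13)
    (hmin : ∀ H : G.Subgraph, H ≠ ⊤ → H.coe.HasStrongColoring 13) :
    ∀ v : V, G.degree v = 2 → ∀ u : V, G.Adj v u → G.degree u = 4 := by
  intro v hv u hvu
  by_contra hu4
  obtain ⟨w, huw, hNv⟩ := SimpleGraph.exists_neighborFinset_eq_pair hv hvu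
  obtain ⟨c, hc⟩ := hmin _ (SimpleGraph.deleteVerts_top_singleton_ne_top v)
  have hcv := hc.extend_spanningCoe fun _ => 0
  rw [SimpleGraph.spanningCoe_deleteVerts_top_singleton] at hcv
  exact hG (SimpleGraph.hasStrongColoring_of_degree_ne_four hNv huw hore hu4
    (hcv.isStrongEdgeColoringOff_incidenceSet.mono (SimpleGraph.incidenceSet_subset_pair hNv)))
end

section
/- Let G be a finite simple graph with Ore-degree θ(G) ≤ 7 such that G admits no strong edge-coloring with 13 colors but every proper subgraph of G admits a strong edge-coloring with 13 colors. Then no cycle of length 4 in G contains a vertex of degree 2. -/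
open Finset

lemma StrongAux.sees_symm {V : Type*} (G : SimpleGraph V) {e f : Sym2 V} (h : G.Sees e f) :
    G.Sees f e := by
  obtain ⟨u, hu, v, hv, huv⟩ := h
  exact ⟨v, hv, u, hu, by rcases huv with h | h; exact Or.inl h.symm; exact Or.inr h.symm⟩

lemma StrongAux.pick_one (F : Finset (Fin 13)) (h : F.card ≤ 12) : ∃ α, α ∉ F := by
  have : (Fᶜ).Nonempty := card_pos.mp (by rw [card_compl]; simp [Fintype.card_fin]; omega)
  obtain ⟨α, hα⟩ := this
  exact ⟨α, mem_compl.mp hα⟩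

lemma StrongAux.pick_two (F1 F2 : Finset (Fin 13)) (h1 : F1.card ≤ 12) (h2 : F2.card ≤ 12)
    (hs : F1.card + F2.card ≤ 22) :
    ∃ α β : Fin 13, α ≠ β ∧ α ∉ F1 ∧ β ∉ F2 := by
  rcases le_or_gt F2.card 11 with h | h
  · obtain ⟨α, hα⟩ := pick_one F1 h1
    obtain ⟨β, hβ⟩ := pick_one (insert α F2) (by
      calc (insert α F2).card ≤ F2.card + 1 := card_insert_le _ _
      _ ≤ 12 := by omega)
    exact ⟨α, β, fun h => hβ (h ▸ mem_insert_self _ _), hα, fun h => hβ (mem_insert_of_mem h)⟩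
  · obtain ⟨β, hβ⟩ := pick_one F2 h2
    obtain ⟨α, hα⟩ := pick_one (insert β F1) (by
      calc (insert β F1).card ≤ F1.card + 1 := card_insert_le _ _
      _ ≤ 12 := by omega)
    exact ⟨α, β, fun h => hα (h ▸ mem_insert_self _ _), fun h => hα (mem_insert_of_mem h), hβ⟩

lemma StrongAux.count_bound {V : Type*} [Fintype V] [DecidableEq V]
    (G : SimpleGraph V) [DecidableRel G.Adj]
    (hore : ∀ u v : V, G.Adj u v → G.degree u + G.degree v ≤ 7)
    {a b c d : V} (hab : G.Adj a b) (hbc : G.Adj b c) (hcd : G.Adj c d) (hda : G.Adj d a)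
    (hac : a ≠ c) (hbd : b ≠ d) (hNb : G.neighborFinset b = {a, c})
    (S : Finset (Sym2 V))
    (hS : ∀ f ∈ S, f ∈ G.edgeSet ∧ f ≠ s(a,b) ∧ f ≠ s(b,c) ∧ G.Sees (s(a,b)) f) :
    S.card ≤ (G.degree a - 1) + (G.degree a - 1) * (6 - G.degree a) + (G.degree c - 2) := by
  set A := G.degree a with hA
  set U1 : Finset (Sym2 V) := (G.incidenceFinset a).erase (s(a,b)) with hU1
  set U2 : Finset (Sym2 V) :=
    ((G.neighborFinset a).erase b).biUnion (fun w => (G.incidenceFinset w).erase (s(w,a))) with hU2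
  set U3 : Finset (Sym2 V) := ((G.incidenceFinset c).erase (s(b,c))).erase (s(c,d)) with hU3
  have hsub : S ⊆ U1 ∪ U2 ∪ U3 := by
    intro f hf
    obtain ⟨hfE, hf1, hf2, hsee⟩ := hS f hf
    have hbf : b ∉ f := by
      intro hbf
      obtain ⟨x, rfl⟩ := Sym2.mem_iff_exists.mp hbf
      have hx : x ∈ G.neighborFinset b := by
        rw [SimpleGraph.mem_neighborFinset]; exact (SimpleGraph.mem_edgeSet G).mp hfE
      rw [hNb] at hx
      rcases Finset.mem_insert.mp hx with rfl | hx
      · exact hf1 (Sym2.eq_swap)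
      · rw [Finset.mem_singleton] at hx; subst hx; exact hf2 rfl
    by_cases haf : a ∈ f
    · refine mem_union_left _ (mem_union_left _ ?_)
      rw [hU1, mem_erase, SimpleGraph.mem_incidenceFinset]
      exact ⟨hf1, hfE, haf⟩
    · obtain ⟨u, hu, v, hv, huv⟩ := hsee
      rw [Sym2.mem_iff] at hu
      have hcase : (∃ w, w ∈ f ∧ w ∈ G.neighborFinset a ∧ w ≠ b) ∨ c ∈ f := by
        rcases hu with rfl | rfl
        · rcases huv with rfl | hadj
          · exact absurd hv haf
          · exact Or.inl ⟨v, hv, (SimpleGraph.mem_neighborFinset G _ _).mpr hadj,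
              fun h => hbf (h ▸ hv)⟩
        · rcases huv with rfl | hadj
          · exact absurd hv hbf
          · have hv2 : v ∈ G.neighborFinset u :=
              (SimpleGraph.mem_neighborFinset G _ _).mpr hadj
            rw [hNb] at hv2
            rcases Finset.mem_insert.mp hv2 with rfl | hv'
            · exact absurd hv haf
            · rw [Finset.mem_singleton] at hv'; subst hv'; exact Or.inr hv
      rcases hcase with ⟨w, hwf, hwa, hwb⟩ | hcf
      · refine mem_union_left _ (mem_union_right _ ?_)
        rw [hU2, mem_biUnion]
        refine ⟨w, mem_erase.mpr ⟨hwb, hwa⟩,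
          mem_erase.mpr ⟨?_, (SimpleGraph.mem_incidenceFinset _ _ _).mpr ⟨hfE, hwf⟩⟩⟩
        intro h; subst h; exact haf (Sym2.mem_mk_right w a)
      · by_cases hfcd : f = s(c,d)
        · refine mem_union_left _ (mem_union_right _ ?_)
          rw [hU2, mem_biUnion]
          refine ⟨d, mem_erase.mpr ⟨Ne.symm hbd,
              (SimpleGraph.mem_neighborFinset G _ _).mpr hda.symm⟩,
            mem_erase.mpr ⟨?_, (SimpleGraph.mem_incidenceFinset _ _ _).mpr
              ⟨hfE, by rw [hfcd]; exact Sym2.mem_mk_right c d⟩⟩⟩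
          intro h; subst h; exact haf (Sym2.mem_mk_right d a)
        · refine mem_union_right _ ?_
          rw [hU3, mem_erase, mem_erase, SimpleGraph.mem_incidenceFinset]
          exact ⟨hfcd, hf2, hfE, hcf⟩
  have hA5 : A ≤ 5 := by
    have := hore a b hab
    have hb2 : 2 ≤ G.degree b := by
      rw [← SimpleGraph.card_neighborFinset_eq_degree, hNb]
      rw [Finset.card_insert_of_notMem (by simp [hac]), Finset.card_singleton]
    omega
  calc S.card ≤ (U1 ∪ U2 ∪ U3).card := card_le_card hsub
    _ ≤ U1.card + U2.card + U3.card := by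
        calc (U1 ∪ U2 ∪ U3).card ≤ (U1 ∪ U2).card + U3.card := card_union_le _ _
        _ ≤ U1.card + U2.card + U3.card := by gcongr; exact card_union_le _ _
    _ ≤ (A - 1) + (A - 1) * (6 - A) + (G.degree c - 2) := by
        gcongr
        · apply le_of_eq
          rw [hU1, card_erase_of_mem, SimpleGraph.card_incidenceFinset_eq_degree]
          rw [SimpleGraph.mem_incidenceFinset]
          exact ⟨hab, Sym2.mem_mk_left a b⟩
        · calc U2.card ≤ ∑ w ∈ (G.neighborFinset a).erase b,
              ((G.incidenceFinset w).erase (s(w,a))).card := card_biUnion_le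
          _ ≤ ((G.neighborFinset a).erase b).card * (6 - A) := by
              rw [← smul_eq_mul]
              apply Finset.sum_le_card_nsmul
              intro w hw
              rw [mem_erase, SimpleGraph.mem_neighborFinset] at hw
              have h7 := hore a w hw.2
              have hcard : ((G.incidenceFinset w).erase (s(w,a))).card = G.degree w - 1 := by
                rw [card_erase_of_mem, SimpleGraph.card_incidenceFinset_eq_degree]
                rw [SimpleGraph.mem_incidenceFinset]
                exact ⟨hw.2.symm, Sym2.mem_mk_left w a⟩
              omega
          _ ≤ (A - 1) * (6 - A) := by
              gcongr
              apply le_of_eq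
              calc ((G.neighborFinset a).erase b).card = (G.neighborFinset a).card - 1 :=
                  card_erase_of_mem ((SimpleGraph.mem_neighborFinset G _ _).mpr hab)
              _ = A - 1 := by rw [SimpleGraph.card_neighborFinset_eq_degree]
        · apply le_of_eq
          have h1 : s(b,c) ∈ G.incidenceFinset c := by
            rw [SimpleGraph.mem_incidenceFinset]
            exact ⟨hbc, Sym2.mem_mk_right b c⟩
          have h2 : s(c,d) ∈ (G.incidenceFinset c).erase (s(b,c)) := by
            rw [mem_erase, SimpleGraph.mem_incidenceFinset]
            refine ⟨?_, hcd, Sym2.mem_mk_left c d⟩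
            intro h; rw [Sym2.eq_iff] at h
            rcases h with ⟨h1', h2'⟩ | ⟨h1', h2'⟩
            · exact hcd.ne h2'.symm
            · exact hbd h2'.symm
          rw [hU3, card_erase_of_mem h2, card_erase_of_mem h1,
            SimpleGraph.card_incidenceFinset_eq_degree]
          omega

lemma StrongAux.key {V : Type*} [Fintype V] [DecidableEq V]
    (G : SimpleGraph V) [DecidableRel G.Adj]
    (hore : ∀ u v : V, G.Adj u v → G.degree u + G.degree v ≤ 7)
    (hG : ¬ G.HasStrongColoring 13)
    (hmin : ∀ H : G.Subgraph, H ≠ ⊤ → H.coe.HasStrongColoring 13)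
    {a b c d : V} (hab : G.Adj a b) (hbc : G.Adj b c) (hcd : G.Adj c d) (hda : G.Adj d a)
    (hac : a ≠ c) (hbd : b ≠ d) : G.degree b ≠ 2 := by
  intro hdb2
  classical
  -- neighbors of b
  have hNb : G.neighborFinset b = {a, c} := by
    refine (Finset.eq_of_subset_of_card_le ?_ ?_).symm
    · intro x hx
      rcases Finset.mem_insert.mp hx with rfl | hx
      · exact (SimpleGraph.mem_neighborFinset G _ _).mpr hab.symm
      · rw [Finset.mem_singleton] at hx; subst hx
        exact (SimpleGraph.mem_neighborFinset G _ _).mpr hbc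
    · rw [Finset.card_insert_of_notMem (by simp [hac]), Finset.card_singleton,
        SimpleGraph.card_neighborFinset_eq_degree, hdb2]
  have hedgeb : ∀ e ∈ G.edgeSet, b ∈ e → e = s(a,b) ∨ e = s(b,c) := by
    intro e he hbe
    obtain ⟨x, rfl⟩ := Sym2.mem_iff_exists.mp hbe
    have hx : x ∈ G.neighborFinset b := by
      rw [SimpleGraph.mem_neighborFinset]; exact (SimpleGraph.mem_edgeSet G).mp he
    rw [hNb] at hx
    rcases Finset.mem_insert.mp hx with rfl | hx
    · exact Or.inl Sym2.eq_swap
    · rw [Finset.mem_singleton] at hx; subst hx; exact Or.inr rfl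
  -- the subgraph with b deleted, and the lifted coloring
  set H : G.Subgraph := (⊤ : G.Subgraph).deleteVerts {b} with hH
  have hne : H ≠ ⊤ := by
    intro h
    have hb : b ∈ H.verts := by rw [h]; trivial
    rw [hH, SimpleGraph.Subgraph.deleteVerts_verts] at hb
    exact hb.2 rfl
  obtain ⟨c₀, hc₀⟩ := hmin H hne
  have ha' : a ∈ H.verts := by
    rw [hH, SimpleGraph.Subgraph.deleteVerts_verts]
    exact ⟨trivial, by simp [hab.ne]⟩
  set g : V → H.verts := fun v => if h : v = b then ⟨a, ha'⟩ else
    ⟨v, by rw [hH, SimpleGraph.Subgraph.deleteVerts_verts]; exact ⟨trivial, h⟩⟩ with hg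
  have hgval : ∀ v : V, v ≠ b → (g v : V) = v := by
    intro v hv; rw [hg]; simp [hv]
  set c₁ : Sym2 V → Fin 13 := fun e => c₀ (e.map g) with hc₁
  have hunmap : ∀ e : Sym2 V, b ∉ e → (e.map g).map (Subtype.val) = e := by
    intro e
    induction e with
    | _ x y =>
      intro hb
      rw [Sym2.map_pair_eq, Sym2.map_pair_eq, hgval x (fun h => hb (h ▸ Sym2.mem_mk_left x y)),
        hgval y (fun h => hb (h ▸ Sym2.mem_mk_right x y))]
  have hadj : ∀ u v : V, u ≠ b → v ≠ b → G.Adj u v → H.coe.Adj (g u) (g v) := by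
    intro u v hu hv huv
    rw [SimpleGraph.Subgraph.coe_adj]
    have h1 : (g u : V) = u := hgval u hu
    have h2 : (g v : V) = v := hgval v hv
    rw [h1, h2, hH]
    rw [SimpleGraph.Subgraph.deleteVerts_adj]
    exact ⟨trivial, hu, trivial, hv, huv⟩
  have hmemE : ∀ e ∈ G.edgeSet, b ∉ e → e.map g ∈ H.coe.edgeSet := by
    intro e
    induction e with
    | _ x y =>
      intro he hb
      rw [Sym2.map_pair_eq, SimpleGraph.mem_edgeSet]
      exact hadj x y (fun h => hb (h ▸ Sym2.mem_mk_left x y))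
        (fun h => hb (h ▸ Sym2.mem_mk_right x y)) ((SimpleGraph.mem_edgeSet G).mp he)
  have hseesmap : ∀ e f : Sym2 V, b ∉ e → b ∉ f → G.Sees e f →
      H.coe.Sees (e.map g) (f.map g) := by
    intro e f hbe hbf ⟨u, hu, v, hv, huv⟩
    refine ⟨g u, Sym2.mem_map.mpr ⟨u, hu, rfl⟩, g v, Sym2.mem_map.mpr ⟨v, hv, rfl⟩, ?_⟩
    rcases huv with rfl | hadj'
    · exact Or.inl rfl
    · exact Or.inr (hadj u v (fun h => hbe (h ▸ hu)) (fun h => hbf (h ▸ hv)) hadj')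
  have hc₁strong : ∀ e ∈ G.edgeSet, ∀ f ∈ G.edgeSet, b ∉ e → b ∉ f → e ≠ f → G.Sees e f →
      c₁ e ≠ c₁ f := by
    intro e he f hf hbe hbf hef hs
    apply hc₀ _ (hmemE e he hbe) _ (hmemE f hf hbf)
    · intro h
      apply hef
      have := congrArg (Sym2.map (Subtype.val : H.verts → V)) h
      rwa [hunmap e hbe, hunmap f hbf] at this
    · exact hseesmap e f hbe hbf hs
  -- forbidden color sets
  set S1 : Finset (Sym2 V) :=
    G.edgeFinset.filter (fun f => f ≠ s(a,b) ∧ f ≠ s(b,c) ∧ G.Sees (s(a,b)) f) with hS1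
  set S2 : Finset (Sym2 V) :=
    G.edgeFinset.filter (fun f => f ≠ s(c,b) ∧ f ≠ s(b,a) ∧ G.Sees (s(c,b)) f) with hS2
  have hNb' : G.neighborFinset b = {c, a} := hNb.trans (Finset.pair_comm a c)
  have hcount1 := StrongAux.count_bound G hore hab hbc hcd hda hac hbd hNb S1 (by
    intro f hf
    rw [hS1, mem_filter, SimpleGraph.mem_edgeFinset] at hf
    exact ⟨hf.1, hf.2⟩)
  have hcount2 := StrongAux.count_bound G hore hbc.symm hab.symm hda.symm hcd.symm hac.symm hbd
    hNb' S2 (by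
    intro f hf
    rw [hS2, mem_filter, SimpleGraph.mem_edgeFinset] at hf
    exact ⟨hf.1, hf.2⟩)
  -- degree bounds
  have hA2 : 2 ≤ G.degree a := by
    rw [← SimpleGraph.card_neighborFinset_eq_degree]
    have : ({b, d} : Finset V) ⊆ G.neighborFinset a := by
      intro x hx
      rcases Finset.mem_insert.mp hx with rfl | hx
      · exact (SimpleGraph.mem_neighborFinset G _ _).mpr hab
      · rw [Finset.mem_singleton] at hx; subst hx
        exact (SimpleGraph.mem_neighborFinset G _ _).mpr hda.symm
    calc 2 = ({b, d} : Finset V).card := by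
          rw [Finset.card_insert_of_notMem (by simp [hbd]), Finset.card_singleton]
      _ ≤ _ := card_le_card this
  have hC2 : 2 ≤ G.degree c := by
    rw [← SimpleGraph.card_neighborFinset_eq_degree]
    have : ({b, d} : Finset V) ⊆ G.neighborFinset c := by
      intro x hx
      rcases Finset.mem_insert.mp hx with rfl | hx
      · exact (SimpleGraph.mem_neighborFinset G _ _).mpr hbc.symm
      · rw [Finset.mem_singleton] at hx; subst hx
        exact (SimpleGraph.mem_neighborFinset G _ _).mpr hcd
    calc 2 = ({b, d} : Finset V).card := by
          rw [Finset.card_insert_of_notMem (by simp [hbd]), Finset.card_singleton]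
      _ ≤ _ := card_le_card this
  have hA5 : G.degree a ≤ 5 := by have := hore a b hab; omega
  have hC5 : G.degree c ≤ 5 := by have := hore b c hbc; omega
  have harith : ∀ A C : ℕ, 2 ≤ A → A ≤ 5 → 2 ≤ C → C ≤ 5 →
      (A - 1) + (A - 1) * (6 - A) + (C - 2) ≤ 12 ∧
      (C - 1) + (C - 1) * (6 - C) + (A - 2) ≤ 12 ∧
      ((A - 1) + (A - 1) * (6 - A) + (C - 2)) + ((C - 1) + (C - 1) * (6 - C) + (A - 2)) ≤ 22 := by
    intro A C h1 h2 h3 h4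
    interval_cases A <;> interval_cases C <;> omega
  obtain ⟨hm1, hm2, hm3⟩ := harith (G.degree a) (G.degree c) hA2 hA5 hC2 hC5
  set F1 : Finset (Fin 13) := S1.image c₁ with hF1
  set F2 : Finset (Fin 13) := S2.image c₁ with hF2
  have hF1card : F1.card ≤ 12 := le_trans (le_trans card_image_le hcount1) hm1
  have hF2card : F2.card ≤ 12 := le_trans (le_trans card_image_le hcount2) hm2
  have hFsum : F1.card + F2.card ≤ 22 := by
    calc F1.card + F2.card ≤ S1.card + S2.card := by
          rw [hF1, hF2]; exact Nat.add_le_add card_image_le card_image_le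
      _ ≤ 22 := by omega
  obtain ⟨α, β, hαβ, hα, hβ⟩ := StrongAux.pick_two F1 F2 hF1card hF2card hFsum
  -- the final coloring
  set c₂ : Sym2 V → Fin 13 := fun e => if e = s(a,b) then α else if e = s(b,c) then β else c₁ e
    with hc₂
  have habne : s(a,b) ≠ s(b,c) := by
    intro h; rw [Sym2.eq_iff] at h
    rcases h with ⟨h1', h2'⟩ | ⟨h1', h2'⟩
    · exact hab.ne h1'
    · exact hac h1'
  have hmem1 : ∀ f' ∈ G.edgeSet, f' ≠ s(a,b) → f' ≠ s(b,c) → G.Sees (s(a,b)) f' →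
      c₁ f' ∈ F1 := by
    intro f' hf' h1 h2 h3
    exact mem_image_of_mem c₁ (mem_filter.mpr ⟨SimpleGraph.mem_edgeFinset.mpr hf', h1, h2, h3⟩)
  have hmem2 : ∀ f' ∈ G.edgeSet, f' ≠ s(a,b) → f' ≠ s(b,c) → G.Sees (s(b,c)) f' →
      c₁ f' ∈ F2 := by
    intro f' hf' h1 h2 h3
    refine mem_image_of_mem c₁ (mem_filter.mpr ⟨SimpleGraph.mem_edgeFinset.mpr hf', ?_, ?_, ?_⟩)
    · rw [Sym2.eq_swap (a := c) (b := b)]; exact h2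
    · rw [Sym2.eq_swap (a := b) (b := a)]; exact h1
    · rw [Sym2.eq_swap (a := c) (b := b)]; exact h3
  apply hG
  refine ⟨c₂, ?_⟩
  intro e he f hf hef hs
  by_cases h1 : e = s(a,b)
  · subst h1
    have hce : c₂ s(a,b) = α := by rw [hc₂]; simp
    by_cases h2 : f = s(b,c)
    · subst h2
      have hcf : c₂ s(b,c) = β := by rw [hc₂]; simp [habne.symm]
      rw [hce, hcf]; exact hαβ
    · have hcf : c₂ f = c₁ f := by rw [hc₂]; simp [Ne.symm hef, h2]
      rw [hce, hcf]
      intro h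
      exact hα (h ▸ hmem1 f hf (Ne.symm hef) h2 hs)
  · by_cases h2 : e = s(b,c)
    · subst h2
      have hce : c₂ s(b,c) = β := by rw [hc₂]; simp [habne.symm]
      by_cases h3 : f = s(a,b)
      · subst h3
        have hcf : c₂ s(a,b) = α := by rw [hc₂]; simp
        rw [hce, hcf]; exact hαβ.symm
      · have hcf : c₂ f = c₁ f := by rw [hc₂]; simp [h3, Ne.symm hef]
        rw [hce, hcf]
        intro h
        exact hβ (h ▸ hmem2 f hf h3 (Ne.symm hef) hs)
    · have hce : c₂ e = c₁ e := by rw [hc₂]; simp [h1, h2]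
      by_cases h3 : f = s(a,b)
      · subst h3
        have hcf : c₂ s(a,b) = α := by rw [hc₂]; simp
        rw [hce, hcf]
        intro h
        exact hα (h ▸ hmem1 e he h1 h2 (StrongAux.sees_symm G hs))
      · by_cases h4 : f = s(b,c)
        · subst h4
          have hcf : c₂ s(b,c) = β := by rw [hc₂]; simp [habne.symm]
          rw [hce, hcf]
          intro h
          exact hβ (h ▸ hmem2 e he h1 h2 (StrongAux.sees_symm G hs))
        · have hcf : c₂ f = c₁ f := by rw [hc₂]; simp [h3, h4]
          rw [hce, hcf]
          have hbe : b ∉ e := by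
            intro hbe
            rcases hedgeb e he hbe with h | h
            · exact h1 h
            · exact h2 h
          have hbf : b ∉ f := by
            intro hbf
            rcases hedgeb f hf hbf with h | h
            · exact h3 h
            · exact h4 h
          exact hc₁strong e he f hf hbe hbf hef hs

theorem statement4 {V : Type*} [Fintype V] [DecidableEq V]
    (G : SimpleGraph V) [DecidableRel G.Adj]
    (hore : ∀ u v : V, G.Adj u v → G.degree u + G.degree v ≤ 7)
    (hG : ¬ G.HasStrongColoring 13)
    (hmin : ∀ H : G.Subgraph, H ≠ ⊤ → H.coe.HasStrongColoring 13) :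
    ∀ a b c d : V, G.Adj a b → G.Adj b c → G.Adj c d → G.Adj d a →
      a ≠ c → b ≠ d →
      G.degree a ≠ 2 ∧ G.degree b ≠ 2 ∧ G.degree c ≠ 2 ∧ G.degree d ≠ 2 := by
  intro a b c d hab hbc hcd hda hac hbd
  exact ⟨StrongAux.key G hore hG hmin hda hab hbc hcd (Ne.symm hbd) hac,
    StrongAux.key G hore hG hmin hab hbc hcd hda hac hbd,
    StrongAux.key G hore hG hmin hbc hcd hda hab hbd (Ne.symm hac),
    StrongAux.key G hore hG hmin hcd hda hab hbc (Ne.symm hac) (Ne.symm hbd)⟩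
end
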